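/- arXiv:1605.05480 — 6 statements merged into one kernel-verified Lean document; each statement's English description precedes it below -/
import Mathlib

section
/- Let β > 0 and C₀ > 0. There exists a constant C > 0 depending only on β such that the following holds: for every integer k ≥ 1, every twice continuously differentiable, square-integrable function h : ℝ → ℝ satisfying -h''(x) + x²·h(x) = (2k-1)·h(x) for all x ∈ ℝ and ∫_ℝ h(x)² dx = 1, every measurable function V : ℝ → ℝ with |V(x)| ≤ C₀·(1+log(1+x²))^{-2β} for all x ∈ ℝ, and every u ∈ L²(ℝ; ℂ), the function x ↦ V(x)·u(x)·h(x) is integrable and |∫_ℝ V(x)·u(x)·h(x) dx| ≤ C·C₀·‖u‖_{L²}·(1+log k)^{-β}. -/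
open MeasureTheory Real intervalIntegral
open scoped ENNReal
set_option maxHeartbeats 1000000

lemma energy_sup_bound (lam : ℝ) (h : ℝ → ℝ) (hh : ContDiff ℝ 2 h)
    (hode : ∀ x : ℝ, deriv (deriv h) x = (x ^ 2 - lam) * h x)
    (hint : Integrable (fun x : ℝ => (h x) ^ 2) volume)
    (hnorm : (∫ x : ℝ, (h x) ^ 2) = 1)
    (hS : 4 ≤ Real.sqrt lam) :
    ∀ x : ℝ, x ^ 2 ≤ lam / 2 → (h x) ^ 2 ≤ 20 / Real.sqrt lam := by
  have hS0 : (0:ℝ) < Real.sqrt lam := by linarith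
  have hlam0 : 0 < lam := by
    rcases lt_or_ge 0 lam with hc | hc
    · exact hc
    · have := Real.sqrt_eq_zero'.mpr hc
      rw [this] at hS; norm_num at hS
  obtain ⟨S, hSdef⟩ : ∃ S : ℝ, S = Real.sqrt lam := ⟨_, rfl⟩
  rw [← hSdef] at hS hS0 ⊢
  have hSsq : S ^ 2 = lam := by rw [hSdef]; exact Real.sq_sqrt hlam0.le
  have hS4 : (4:ℝ) ≤ S := hS
  -- differentiability facts
  have hdiff : Differentiable ℝ h := hh.differentiable (by norm_num)
  have h2 : ContDiff ℝ ((1:ℕ) + 1) h := by exact_mod_cast hh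
  have hd1 : ContDiff ℝ 1 (deriv h) := (contDiff_succ_iff_deriv.mp h2).2.2
  have hdiff' : Differentiable ℝ (deriv h) := hd1.differentiable one_ne_zero
  have hcont : Continuous h := hdiff.continuous
  have hcont' : Continuous (deriv h) := hdiff'.continuous
  have hdd : deriv (deriv h) = fun x => (x ^ 2 - lam) * h x := funext hode
  have hcont'' : Continuous (deriv (deriv h)) := by
    rw [hdd]; fun_prop
  -- the energy function
  set E : ℝ → ℝ := fun x => (deriv h x) ^ 2 + (lam - x ^ 2) * (h x) ^ 2 with hEdef
  have hE : ∀ x : ℝ, HasDerivAt E (-2 * x * (h x) ^ 2) x := by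
    intro x
    have e1 : HasDerivAt (fun y => (deriv h y) ^ 2)
        (2 * deriv h x ^ 1 * deriv (deriv h) x) x :=
      ((hdiff' x).hasDerivAt).pow 2
    have e2 : HasDerivAt (fun y : ℝ => lam - y ^ 2) (-(2 * x ^ 1)) x :=
      (hasDerivAt_pow 2 x).const_sub lam
    have e3 : HasDerivAt (fun y => (h y) ^ 2) (2 * h x ^ 1 * deriv h x) x :=
      ((hdiff x).hasDerivAt).pow 2
    have e4 := e2.mul e3
    have e5 := e1.add e4
    refine e5.congr_deriv ?_
    rw [hode x]; ring
  have hEcont : Continuous E := by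
    have := fun x => (hE x).differentiableAt
    exact (Differentiable.continuous this)
  have hEdiffble : Differentiable ℝ E := fun x => (hE x).differentiableAt
  have hEderiv : ∀ x, deriv E x = -2 * x * (h x) ^ 2 := fun x => (hE x).deriv
  obtain ⟨M, hMdef⟩ : ∃ M : ℝ, M = E 0 := ⟨_, rfl⟩
  have hM0 : 0 ≤ M := by
    have h0 : E 0 = (deriv h 0) ^ 2 + lam * (h 0) ^ 2 := by simp [hEdef]
    rw [hMdef, h0]; positivity
  -- E x ≤ M for all x
  have hmax : ∀ x : ℝ, E x ≤ M := by
    intro x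
    rw [hMdef]
    rcases le_total 0 x with hx | hx
    · have hanti : AntitoneOn E (Set.Ici 0) := by
        apply antitoneOn_of_deriv_nonpos (convex_Ici 0) hEcont.continuousOn
          hEdiffble.differentiableOn
        intro y hy
        rw [interior_Ici] at hy
        rw [hEderiv]
        nlinarith [sq_nonneg (h y), le_of_lt (show (0:ℝ) < y from hy)]
      exact hanti (Set.self_mem_Ici) hx hx
    · have hmono : MonotoneOn E (Set.Iic 0) := by
        apply monotoneOn_of_deriv_nonneg (convex_Iic 0) hEcont.continuousOn
          hEdiffble.differentiableOn
        intro y hy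
        rw [interior_Iic] at hy
        rw [hEderiv]
        nlinarith [sq_nonneg (h y), le_of_lt (show y < (0:ℝ) from hy)]
      exact hmono hx Set.self_mem_Iic hx
  have hh2nonneg : (0:ℝ→ℝ) ≤ᵐ[volume] fun x => (h x) ^ 2 :=
    Filter.Eventually.of_forall fun x => sq_nonneg (h x)
  -- partial L² mass bounds
  have hmass : ∀ x : ℝ, 0 ≤ x → (∫ t in (0:ℝ)..x, (h t) ^ 2) ≤ 1 := by
    intro x hx
    rw [intervalIntegral.integral_of_le hx]
    rw [← hnorm]
    exact setIntegral_le_integral hint hh2nonneg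
  obtain ⟨L, hLdef⟩ : ∃ L : ℝ, L = S / 2 := ⟨_, rfl⟩
  have hL0 : 0 < L := by rw [hLdef]; linarith
  have hLsq : L ^ 2 = lam / 4 := by rw [hLdef]; nlinarith
  -- lower bound for E on [0, L]
  have hElow : ∀ x ∈ Set.Icc (0:ℝ) L, M - 2 * L ≤ E x := by
    intro x hx
    have hftc : ∫ t in (0:ℝ)..x, (-2 * t * (h t) ^ 2) = E x - E 0 :=
      integral_eq_sub_of_hasDerivAt (fun t _ => hE t)
        ((by fun_prop : Continuous fun t : ℝ => -2 * t * (h t) ^ 2).intervalIntegrable 0 x)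
    have hb : ∫ t in (0:ℝ)..x, (2 * t * (h t) ^ 2) ≤ 2 * L := by
      have step1 : ∫ t in (0:ℝ)..x, (2 * t * (h t) ^ 2) ≤
          ∫ t in (0:ℝ)..x, (2 * L * (h t) ^ 2) := by
        apply intervalIntegral.integral_mono_on hx.1
          ((by fun_prop : Continuous fun t : ℝ => 2 * t * (h t) ^ 2).intervalIntegrable 0 x)
          ((by fun_prop : Continuous fun t : ℝ => 2 * L * (h t) ^ 2).intervalIntegrable 0 x)
        intro t ht
        have ht2 : t ≤ L := le_trans ht.2 hx.2
        nlinarith [sq_nonneg (h t), ht.1]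
      have step2 : ∫ t in (0:ℝ)..x, (2 * L * (h t) ^ 2) = 2 * L * ∫ t in (0:ℝ)..x, (h t) ^ 2 :=
        intervalIntegral.integral_const_mul _ _
      have step3 := hmass x hx.1
      nlinarith [step1, step2, step3, hL0]
    have heq : ∫ t in (0:ℝ)..x, (-2 * t * (h t) ^ 2) =
        -∫ t in (0:ℝ)..x, (2 * t * (h t) ^ 2) := by
      rw [← intervalIntegral.integral_neg]
      congr 1; funext t; ring
    rw [heq] at hftc
    have : E x = M - ∫ t in (0:ℝ)..x, (2 * t * (h t) ^ 2) := by
      rw [hMdef]; linarith [hftc]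
    linarith [this, hb]
  -- pointwise bounds on [0, L]
  have hptwise : ∀ x ∈ Set.Icc (0:ℝ) L, (deriv h x) ^ 2 ≤ M ∧ lam * (h x) ^ 2 ≤ 2 * M := by
    intro x hx
    have hxsq : x ^ 2 ≤ lam / 4 := by
      rw [← hLsq]; nlinarith [hx.1, hx.2]
    have hEx : deriv h x ^ 2 + (lam - x ^ 2) * (h x) ^ 2 ≤ M := hmax x
    constructor
    · nlinarith [sq_nonneg (h x)]
    · nlinarith [sq_nonneg (h x), sq_nonneg (deriv h x)]
  -- integration by parts
  have hibp : ∫ t in (0:ℝ)..L, (deriv h t * deriv h t + h t * deriv (deriv h) t) =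
      h L * deriv h L - h 0 * deriv h 0 :=
    integral_deriv_mul_eq_sub (fun x _ => (hdiff x).hasDerivAt)
      (fun x _ => (hdiff' x).hasDerivAt)
      (hcont'.intervalIntegrable 0 L) (hcont''.intervalIntegrable 0 L)
  have hsplit : ∫ t in (0:ℝ)..L, (deriv h t * deriv h t + h t * deriv (deriv h) t) =
      (∫ t in (0:ℝ)..L, (deriv h t) ^ 2) - ∫ t in (0:ℝ)..L, (lam - t ^ 2) * (h t) ^ 2 := by
    rw [← intervalIntegral.integral_sub (f := fun t => deriv h t ^ 2)
      ((hcont'.pow 2 : Continuous fun t => deriv h t ^ 2).intervalIntegrable 0 L)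
      (((by fun_prop : Continuous fun t : ℝ => (lam - t ^ 2) * (h t) ^ 2)).intervalIntegrable 0 L)]
    apply intervalIntegral.integral_congr
    intro t _
    simp only
    rw [hode t]; ring
  -- bound ∫ (lam - t^2) h^2 from above by lam
  have hA : ∫ t in (0:ℝ)..L, (lam - t ^ 2) * (h t) ^ 2 ≤ lam := by
    have step1 : ∫ t in (0:ℝ)..L, (lam - t ^ 2) * (h t) ^ 2 ≤
        ∫ t in (0:ℝ)..L, lam * (h t) ^ 2 := by
      apply intervalIntegral.integral_mono_on hL0.le
        (((by fun_prop : Continuous fun t : ℝ => (lam - t ^ 2) * (h t) ^ 2)).intervalIntegrable 0 L)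
        ((by fun_prop : Continuous fun t : ℝ => lam * (h t) ^ 2).intervalIntegrable 0 L)
      intro t ht
      nlinarith [sq_nonneg (h t), sq_nonneg t]
    have step2 : ∫ t in (0:ℝ)..L, lam * (h t) ^ 2 = lam * ∫ t in (0:ℝ)..L, (h t) ^ 2 :=
      intervalIntegral.integral_const_mul _ _
    have step3 := hmass L hL0.le
    nlinarith [step1, step2, step3, hlam0]
  -- boundary bound
  have hbdry : h L * deriv h L - h 0 * deriv h 0 ≤ 3 * M / S := by
    have p1 := hptwise L ⟨hL0.le, le_refl L⟩
    have p2 := hptwise 0 ⟨le_refl 0, hL0.le⟩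
    have q1 : 2 * S * (h L * deriv h L) ≤ 3 * M := by
      nlinarith [sq_nonneg (S * h L - deriv h L), p1.1, p1.2, hSsq]
    have q2 : 2 * S * (-(h 0 * deriv h 0)) ≤ 3 * M := by
      nlinarith [sq_nonneg (S * h 0 + deriv h 0), p2.1, p2.2, hSsq]
    rw [le_div_iff₀ hS0]
    nlinarith [q1, q2, hS0]
  -- upper bound for ∫ h'^2
  have hIhp : ∫ t in (0:ℝ)..L, (deriv h t) ^ 2 ≤ 3 * M / S + lam := by
    have := hibp
    rw [hsplit] at this
    linarith [hA, hbdry, this.ge, this.le]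
  -- lower bound for ∫ E
  have hElower : (M - 2 * L) * L ≤ ∫ t in (0:ℝ)..L, E t := by
    have hconst : ∫ t in (0:ℝ)..L, (M - 2 * L) = (M - 2 * L) * L := by
      rw [intervalIntegral.integral_const]; simp [smul_eq_mul]; ring
    have hmono : ∫ t in (0:ℝ)..L, (M - 2 * L) ≤ ∫ t in (0:ℝ)..L, E t := by
      apply intervalIntegral.integral_mono_on hL0.le
        (intervalIntegrable_const) (hEcont.intervalIntegrable 0 L)
      exact fun t ht => hElow t ht
    linarith [hconst, hmono]
  have hEint : ∫ t in (0:ℝ)..L, E t =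
      (∫ t in (0:ℝ)..L, (deriv h t) ^ 2) + ∫ t in (0:ℝ)..L, (lam - t ^ 2) * (h t) ^ 2 := by
    rw [← intervalIntegral.integral_add (f := fun t => deriv h t ^ 2)
      ((hcont'.pow 2 : Continuous fun t => deriv h t ^ 2).intervalIntegrable 0 L)
      (((by fun_prop : Continuous fun t : ℝ => (lam - t ^ 2) * (h t) ^ 2)).intervalIntegrable 0 L)]
  -- combine to bound M
  have hMbound : M ≤ 10 * S := by
    have key : (M - 2 * L) * L ≤ 3 * M / S + 2 * lam := by
      have := hElower
      rw [hEint] at this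
      linarith [hIhp, hA]
    rw [hLdef] at key
    -- clear denominators: multiply key by S > 0
    have key2 : (M - S) * (S / 2) * S ≤ (3 * M / S) * S + 2 * lam * S := by
      nlinarith [key, hS0]
    have hMS : 3 * M / S * S = 3 * M := by field_simp
    rw [hMS] at key2
    have hS16 : (16:ℝ) ≤ S ^ 2 := by nlinarith [hS4]
    have hcube : 16 * S ≤ S ^ 3 := by nlinarith [hS16, hS0]
    nlinarith [key2, hSsq, hM0, hS0, hS16, hcube, hS4]
  -- conclusion
  intro x hx
  have h1 : (lam - x ^ 2) * (h x) ^ 2 ≤ M := by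
    have hEx : deriv h x ^ 2 + (lam - x ^ 2) * (h x) ^ 2 ≤ M := hmax x
    nlinarith [sq_nonneg (deriv h x)]
  have h2' : lam / 2 ≤ lam - x ^ 2 := by linarith
  rw [le_div_iff₀ hS0]
  nlinarith [h1, hMbound, h2', sq_nonneg (h x), hSsq, hS0, hlam0,
    mul_le_mul_of_nonneg_left h2' (sq_nonneg (h x))]

lemma log_weight_calc (β : ℝ) (hβ : 0 < β) (t : ℝ) (ht : 0 ≤ t) :
    40 * Real.exp (Real.sqrt (1 + t) - t / 2) ≤
      (40 * Real.exp ((1 + 4 * β) ^ 2 / 2 + 1 / 2)) * (1 + t) ^ (-(2 * β)) := by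
  have hpos : (0:ℝ) < 1 + t := by linarith
  have hs0 : 0 ≤ Real.sqrt (1 + t) := Real.sqrt_nonneg _
  have hsq : Real.sqrt (1 + t) ^ 2 = 1 + t := Real.sq_sqrt hpos.le
  have hlog : Real.log (1 + t) ≤ 2 * Real.sqrt (1 + t) := by
    have h1 := Real.log_le_sub_one_of_pos (Real.sqrt_pos.mpr hpos)
    rw [Real.log_sqrt hpos.le] at h1
    linarith
  rw [Real.rpow_def_of_pos hpos, mul_assoc, ← Real.exp_add]
  have h40 : (0:ℝ) < 40 := by norm_num
  rw [mul_le_mul_iff_right₀ h40, Real.exp_le_exp]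
  nlinarith [sq_nonneg (Real.sqrt (1 + t) - (1 + 4 * β)),
    mul_le_mul_of_nonneg_left hlog hβ.le, hβ]

/-- Logarithmic decay of the Hermite coefficients of `V·u` for a potential `V`
with logarithmic decay (from the proof of Theorem 4.1, Assumption B). -/
theorem hermite_coefficient_log_decay (β : ℝ) (hβ : 0 < β) :
    ∃ C : ℝ, 0 < C ∧ ∀ C₀ : ℝ, 0 < C₀ → ∀ (k : ℕ), 1 ≤ k → ∀ h : ℝ → ℝ,
      ContDiff ℝ 2 h →
      MemLp h 2 volume →
      (∀ x : ℝ, -(deriv (deriv h) x) + x ^ 2 * h x = (2 * (k : ℝ) - 1) * h x) →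
      (∫ x : ℝ, (h x) ^ 2) = 1 →
      ∀ V : ℝ → ℝ, Measurable V →
      (∀ x : ℝ, |V x| ≤ C₀ * (1 + Real.log (1 + x ^ 2)) ^ (-(2 * β))) →
      ∀ u : ℝ → ℂ, MemLp u 2 volume →
      Integrable (fun x : ℝ => (V x : ℂ) * u x * (h x : ℂ)) volume ∧
      ‖∫ x : ℝ, (V x : ℂ) * u x * (h x : ℂ)‖ ≤
        C * C₀ * (eLpNorm u 2 volume).toReal * (1 + Real.log k) ^ (-β) := by
  obtain ⟨Cp, hCpdef⟩ : ∃ Cp : ℝ, Cp = 40 * Real.exp ((1 + 4 * β) ^ 2 / 2 + 1 / 2) := ⟨_, rfl⟩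
  have hCp0 : 0 < Cp := by rw [hCpdef]; positivity
  refine ⟨(21:ℝ) ^ β + 1 + Cp ^ (1/(2:ℝ)), by positivity, ?_⟩
  intro C₀ hC₀ k hk h hh hhL2 hode hnorm V hV hVb u hu
  have hcont : Continuous h := (hh.differentiable (by norm_num)).continuous
  have hh2int : Integrable (fun x : ℝ => (h x) ^ 2) volume := hhL2.integrable_sq
  obtain ⟨t, htdef⟩ : ∃ t : ℝ, t = Real.log k := ⟨_, rfl⟩
  rw [← htdef]
  have hk1 : (1:ℝ) ≤ (k:ℝ) := by exact_mod_cast hk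
  have hkpos : (0:ℝ) < k := by linarith
  have ht0 : 0 ≤ t := htdef ▸ Real.log_nonneg hk1
  have h1t : (0:ℝ) < 1 + t := by linarith
  obtain ⟨N, hNdef⟩ : ∃ N : ℝ, N = (eLpNorm u 2 volume).toReal := ⟨_, rfl⟩
  rw [← hNdef]
  have hN0 : 0 ≤ N := hNdef ▸ ENNReal.toReal_nonneg
  -- weight facts
  have hw_base : ∀ x : ℝ, (1:ℝ) ≤ 1 + Real.log (1 + x ^ 2) := by
    intro x
    have := Real.log_nonneg (by nlinarith [sq_nonneg x] : (1:ℝ) ≤ 1 + x ^ 2)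
    linarith
  have hw1 : ∀ x : ℝ, (1 + Real.log (1 + x ^ 2)) ^ (-(2 * β)) ≤ 1 := fun x =>
    Real.rpow_le_one_of_one_le_of_nonpos (hw_base x) (by linarith)
  have hwpos : ∀ x : ℝ, 0 ≤ (1 + Real.log (1 + x ^ 2)) ^ (-(2 * β)) := fun x =>
    Real.rpow_nonneg (by linarith [hw_base x]) _
  have hVle : ∀ x : ℝ, |V x| ≤ C₀ := by
    intro x
    refine le_trans (hVb x) ?_
    have := hw1 x
    nlinarith [hwpos x]
  -- norm of the integrand
  have hfnorm : ∀ x : ℝ, ‖(V x : ℂ) * u x * (h x : ℂ)‖ = |V x| * ‖u x‖ * |h x| := by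
    intro x
    rw [norm_mul, norm_mul, Complex.norm_real, Complex.norm_real]
    simp [Real.norm_eq_abs]
  -- integrability of the product of the two L² functions
  have hg : Integrable (fun x : ℝ => ‖u x‖ * |h x|) volume := by
    have h1 : MemLp (fun x : ℝ => ‖u x‖) 2 volume := hu.norm
    have h2 : MemLp (fun x : ℝ => |h x|) 2 volume := hhL2.norm
    have h3 : MemLp ((fun x : ℝ => ‖u x‖) • (fun x : ℝ => |h x|)) 1 volume :=
      h2.smul h1
    rw [memLp_one_iff_integrable] at h3
    exact h3
  have hgnn : (0:ℝ→ℝ) ≤ᵐ[volume] (fun x : ℝ => ‖u x‖ * |h x|) :=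
    Filter.Eventually.of_forall (fun x => mul_nonneg (norm_nonneg _) (abs_nonneg _))
  have hmeasf : AEStronglyMeasurable (fun x : ℝ => (V x : ℂ) * u x * (h x : ℂ)) volume := by
    refine AEStronglyMeasurable.mul (AEStronglyMeasurable.mul ?_ hu.1) ?_
    · exact (Complex.measurable_ofReal.comp hV).aestronglyMeasurable
    · exact (Complex.continuous_ofReal.comp hcont).aestronglyMeasurable
  -- domination
  have hdom : ∀ x : ℝ, ‖(V x : ℂ) * u x * (h x : ℂ)‖ ≤ C₀ * (‖u x‖ * |h x|) := by
    intro x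
    rw [hfnorm x]
    calc |V x| * ‖u x‖ * |h x| ≤ C₀ * ‖u x‖ * |h x| :=
          mul_le_mul_of_nonneg_right
            (mul_le_mul_of_nonneg_right (hVle x) (norm_nonneg _)) (abs_nonneg _)
      _ = C₀ * (‖u x‖ * |h x|) := by ring
  have hfint : Integrable (fun x : ℝ => (V x : ℂ) * u x * (h x : ℂ)) volume :=
    (hg.const_mul C₀).mono' hmeasf (Filter.Eventually.of_forall hdom)
  refine ⟨hfint, ?_⟩
  -- Cauchy-Schwarz on the whole line
  have hconj : Real.HolderConjugate 2 2 := Real.HolderConjugate.two_two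
  have h2of : ENNReal.ofReal (2:ℝ) = 2 := by norm_num
  have h2t : (2:ℝ≥0∞).toReal = 2 := by norm_num
  have huint2 : Integrable (fun x : ℝ => ‖u x‖ ^ (2:ℝ)) volume := by
    have := hu.norm.integrable_sq
    refine this.congr (Filter.Eventually.of_forall fun x => ?_)
    show (‖u x‖:ℝ) ^ (2:ℕ) = ‖u x‖ ^ (2:ℝ)
    rw [← Real.rpow_natCast (‖u x‖) 2]; norm_num
  have e2 : (∫ x : ℝ, ‖u x‖ ^ (2:ℝ)) ^ (1/(2:ℝ)) = N := by
    rw [hNdef, hu.eLpNorm_eq_integral_rpow_norm two_ne_zero ENNReal.ofNat_ne_top,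
      h2t, ENNReal.toReal_ofReal (by positivity), one_div]
  have e1 : ∫ x : ℝ, ‖(h x : ℂ)‖ ^ (2:ℝ) = 1 := by
    rw [← hnorm]
    refine integral_congr_ae (Filter.Eventually.of_forall fun x => ?_)
    show ‖(h x : ℂ)‖ ^ (2:ℝ) = h x ^ (2:ℕ)
    rw [Complex.norm_real, show (2:ℝ) = ((2:ℕ):ℝ) from by norm_num, Real.rpow_natCast]
    simp [Real.norm_eq_abs, sq_abs]
  have hu2 : MemLp u (ENNReal.ofReal (2:ℝ)) volume := by rw [h2of]; exact hu
  have hh2 : MemLp (fun x : ℝ => (h x : ℂ)) (ENNReal.ofReal (2:ℝ)) volume := by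
    rw [h2of]; exact hhL2.ofReal
  have hCS : ∫ x : ℝ, ‖u x‖ * |h x| ≤ N := by
    have key := integral_mul_norm_le_Lp_mul_Lq hconj hu2 hh2
    calc ∫ x : ℝ, ‖u x‖ * |h x| = ∫ x : ℝ, ‖u x‖ * ‖(h x : ℂ)‖ := by
          simp [Real.norm_eq_abs]
      _ ≤ (∫ x : ℝ, ‖u x‖ ^ (2:ℝ)) ^ (1/(2:ℝ)) * (∫ x : ℝ, ‖(h x : ℂ)‖ ^ (2:ℝ)) ^ (1/(2:ℝ)) := key
      _ = N * 1 := by rw [e1, e2, Real.one_rpow]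
      _ = N := mul_one N
  -- main case split
  rcases le_or_gt 20 t with hcase | hcase
  · -- main case : 20 ≤ t
    obtain ⟨r, hrdef⟩ : ∃ r : ℝ, r = Real.exp (Real.sqrt (1 + t)) := ⟨_, rfl⟩
    have hr0 : 0 < r := hrdef ▸ Real.exp_pos _
    have hr2 : r ^ 2 = Real.exp (2 * Real.sqrt (1 + t)) := by
      rw [hrdef, sq, ← Real.exp_add]; ring_nf
    obtain ⟨A, hAdef⟩ : ∃ A : Set ℝ, A = Set.Icc (-r) r := ⟨_, rfl⟩
    have hAmeas : MeasurableSet A := hAdef ▸ measurableSet_Icc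
    have hvolA : (volume A).toReal = 2 * r := by
      rw [hAdef, Real.volume_Icc, ENNReal.toReal_ofReal (by linarith)]; ring
    have hvolAfin : volume A < ⊤ := by rw [hAdef]; exact measure_Icc_lt_top
    have hkexp : (k:ℝ) = Real.exp t := by rw [htdef, Real.exp_log hkpos]
    obtain ⟨lam, hlamdef⟩ : ∃ lam : ℝ, lam = 2 * (k:ℝ) - 1 := ⟨_, rfl⟩
    have hexpt : (21:ℝ) ≤ Real.exp t := by
      have h1 := Real.add_one_le_exp t
      linarith
    have hexpt1 : (1:ℝ) ≤ Real.exp t := by linarith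
    have hlam41 : (41:ℝ) ≤ lam := by rw [hlamdef, hkexp]; linarith
    have hlampos : (0:ℝ) < lam := by linarith
    have hS4 : (4:ℝ) ≤ Real.sqrt lam := by
      rw [show (4:ℝ) = Real.sqrt 16 by
        rw [show (16:ℝ) = 4 ^ 2 by norm_num, Real.sqrt_sq (by norm_num : (0:ℝ) ≤ 4)]]
      exact Real.sqrt_le_sqrt (by linarith)
    have hsqrtlam0 : (0:ℝ) < Real.sqrt lam := by linarith
    have hode' : ∀ x : ℝ, deriv (deriv h) x = (x ^ 2 - lam) * h x := by
      intro x
      have h1 := hode x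
      rw [hlamdef]
      linear_combination -h1
    have hsup := energy_sup_bound lam h hh hode' hh2int hnorm hS4
    -- r^2 ≤ lam / 2
    have hsqrt_t : 2 * Real.sqrt (1 + t) ≤ t - 1 := by
      have hs : Real.sqrt (1 + t) ≤ (t - 1) / 2 := by
        have h1 : (1 + t) ≤ ((t - 1) / 2) ^ 2 := by nlinarith
        calc Real.sqrt (1 + t) ≤ Real.sqrt (((t - 1) / 2) ^ 2) := Real.sqrt_le_sqrt h1
          _ = (t - 1) / 2 := Real.sqrt_sq (by linarith)
      linarith
    have hr2lam : r ^ 2 ≤ lam / 2 := by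
      rw [hr2, hlamdef, hkexp]
      have h3 : Real.exp (2 * Real.sqrt (1 + t)) ≤ Real.exp (t - 1) :=
        Real.exp_le_exp.mpr hsqrt_t
      have h4 : Real.exp (t - 1) = Real.exp t * Real.exp (-1) := by
        rw [← Real.exp_add]; ring_nf
      have h5 : Real.exp (-1) ≤ 1 / 2 := by
        have h6 : (2:ℝ) ≤ Real.exp 1 := by have := Real.add_one_le_exp 1; linarith
        rw [Real.exp_neg, ← one_div]
        exact one_div_le_one_div_of_le (by norm_num) h6
      nlinarith [h3, h4, h5, hexpt1, Real.exp_pos t]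
    -- sup bound on A
    have hsupA : ∀ x ∈ A, (h x) ^ 2 ≤ 20 / Real.sqrt lam := by
      intro x hx
      rw [hAdef] at hx
      exact hsup x (le_trans (sq_le_sq' hx.1 hx.2) hr2lam)
    -- mass of h² on A
    have hintA : ∫ x in A, (h x) ^ 2 ≤ 2 * r * (20 / Real.sqrt lam) := by
      calc ∫ x in A, (h x) ^ 2 ≤ ∫ _x in A, (20 / Real.sqrt lam) :=
            setIntegral_mono_on hh2int.integrableOn
              (integrableOn_const hvolAfin.ne) hAmeas hsupA
        _ = (volume A).toReal * (20 / Real.sqrt lam) := by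
            rw [setIntegral_const, smul_eq_mul]; rfl
        _ = 2 * r * (20 / Real.sqrt lam) := by rw [hvolA]
    have hsqrtk : Real.sqrt (Real.exp t) = Real.exp (t / 2) := by
      rw [show Real.exp t = Real.exp (t / 2) ^ 2 by rw [sq, ← Real.exp_add]; ring_nf,
        Real.sqrt_sq (Real.exp_pos _).le]
    have hsqrtlam : Real.exp (t / 2) ≤ Real.sqrt lam := by
      rw [← hsqrtk]
      apply Real.sqrt_le_sqrt
      rw [hlamdef, hkexp]; linarith
    have hbound2 : 2 * r * (20 / Real.sqrt lam) ≤ Cp * (1 + t) ^ (-(2 * β)) := by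
      have h1 : 20 / Real.sqrt lam ≤ 20 / Real.exp (t / 2) := by
        gcongr
      have h1' : 2 * r * (20 / Real.sqrt lam) ≤ 2 * r * (20 / Real.exp (t / 2)) :=
        mul_le_mul_of_nonneg_left h1 (by linarith)
      have h2 : 2 * r * (20 / Real.exp (t / 2)) = 40 * Real.exp (Real.sqrt (1 + t) - t / 2) := by
        rw [hrdef, Real.exp_sub]; ring
      have h3 := log_weight_calc β hβ t ht0
      rw [← hCpdef] at h3
      calc 2 * r * (20 / Real.sqrt lam) ≤ 2 * r * (20 / Real.exp (t / 2)) := h1'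
        _ = 40 * Real.exp (Real.sqrt (1 + t) - t / 2) := h2
        _ ≤ Cp * (1 + t) ^ (-(2 * β)) := h3
    have hPb : (∫ x in A, (h x) ^ 2) ^ (1/(2:ℝ)) ≤ Cp ^ (1/(2:ℝ)) * (1 + t) ^ (-β) := by
      have hnn : 0 ≤ ∫ x in A, (h x) ^ 2 := integral_nonneg fun x => sq_nonneg _
      have h1 : (∫ x in A, (h x) ^ 2) ^ (1/(2:ℝ)) ≤ (Cp * (1 + t) ^ (-(2 * β))) ^ (1/(2:ℝ)) :=
        Real.rpow_le_rpow hnn (le_trans hintA hbound2) (by norm_num)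
      rw [Real.mul_rpow hCp0.le (Real.rpow_nonneg h1t.le _),
        ← Real.rpow_mul h1t.le, show (-(2*β))*(1/(2:ℝ)) = -β by ring] at h1
      exact h1
    -- restricted Hölder
    have hbulkCS : ∫ x in A, ‖u x‖ * |h x| ≤ N * (∫ x in A, (h x) ^ 2) ^ (1/(2:ℝ)) := by
      have hu2A : MemLp u (ENNReal.ofReal (2:ℝ)) (volume.restrict A) := by
        rw [h2of]; exact hu.restrict A
      have hh2A : MemLp (fun x : ℝ => (h x : ℂ)) (ENNReal.ofReal (2:ℝ)) (volume.restrict A) := by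
        rw [h2of]; exact hhL2.ofReal.restrict A
      have key := integral_mul_norm_le_Lp_mul_Lq hconj hu2A hh2A
      have eA1 : ∫ x in A, ‖(h x : ℂ)‖ ^ (2:ℝ) = ∫ x in A, (h x) ^ 2 := by
        refine integral_congr_ae (Filter.Eventually.of_forall fun x => ?_)
        show ‖(h x : ℂ)‖ ^ (2:ℝ) = h x ^ (2:ℕ)
        rw [Complex.norm_real, show (2:ℝ) = ((2:ℕ):ℝ) from by norm_num, Real.rpow_natCast]
        simp [Real.norm_eq_abs, sq_abs]
      have eA2 : (∫ x in A, ‖u x‖ ^ (2:ℝ)) ^ (1/(2:ℝ)) ≤ N := by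
        rw [← e2]
        refine Real.rpow_le_rpow
          (integral_nonneg fun x => Real.rpow_nonneg (norm_nonneg _) _) ?_ (by norm_num)
        exact setIntegral_le_integral huint2
          (Filter.Eventually.of_forall fun x => Real.rpow_nonneg (norm_nonneg _) _)
      calc ∫ x in A, ‖u x‖ * |h x| = ∫ x in A, ‖u x‖ * ‖(h x : ℂ)‖ := by
            simp [Real.norm_eq_abs]
        _ ≤ (∫ x in A, ‖u x‖ ^ (2:ℝ)) ^ (1/(2:ℝ)) * (∫ x in A, ‖(h x : ℂ)‖ ^ (2:ℝ)) ^ (1/(2:ℝ)) :=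
            key
        _ ≤ N * (∫ x in A, (h x) ^ 2) ^ (1/(2:ℝ)) := by
            rw [eA1]
            exact mul_le_mul_of_nonneg_right eA2
              (Real.rpow_nonneg (integral_nonneg fun x => sq_nonneg _) _)
    -- bulk estimate
    have hbulk : ∫ x in A, ‖(V x:ℂ) * u x * (h x:ℂ)‖ ≤
        C₀ * (N * (Cp ^ (1/(2:ℝ)) * (1 + t) ^ (-β))) := by
      calc ∫ x in A, ‖(V x:ℂ) * u x * (h x:ℂ)‖ ≤ ∫ x in A, C₀ * (‖u x‖ * |h x|) :=
            setIntegral_mono_on hfint.norm.integrableOn ((hg.const_mul C₀).integrableOn) hAmeas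
              (fun x _ => hdom x)
        _ = C₀ * ∫ x in A, ‖u x‖ * |h x| := integral_const_mul _ _
        _ ≤ C₀ * (N * (∫ x in A, (h x) ^ 2) ^ (1/(2:ℝ))) :=
            mul_le_mul_of_nonneg_left hbulkCS hC₀.le
        _ ≤ C₀ * (N * (Cp ^ (1/(2:ℝ)) * (1 + t) ^ (-β))) := by
            refine mul_le_mul_of_nonneg_left ?_ hC₀.le
            exact mul_le_mul_of_nonneg_left hPb hN0
    -- tail pointwise weight bound
    have htailw : ∀ x : ℝ, x ∉ A → (1 + Real.log (1 + x ^ 2)) ^ (-(2 * β)) ≤ (1 + t) ^ (-β) := by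
      intro x hx
      have hx2 : r ^ 2 ≤ x ^ 2 := by
        rw [hAdef, Set.mem_Icc, not_and_or, not_le, not_le] at hx
        rcases hx with hx | hx
        · nlinarith
        · nlinarith
      have hlogx : 2 * Real.sqrt (1 + t) ≤ Real.log (1 + x ^ 2) := by
        have hle : r ^ 2 ≤ 1 + x ^ 2 := by nlinarith
        have h2 : Real.log (r ^ 2) ≤ Real.log (1 + x ^ 2) :=
          Real.log_le_log (by positivity) hle
        rwa [hr2, Real.log_exp] at h2
      have hbase : (1 + t) ^ ((1:ℝ)/2) ≤ 1 + Real.log (1 + x ^ 2) := by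
        rw [← Real.sqrt_eq_rpow]
        have := Real.sqrt_nonneg (1 + t)
        linarith
      calc (1 + Real.log (1 + x ^ 2)) ^ (-(2 * β))
          ≤ ((1 + t) ^ ((1:ℝ)/2)) ^ (-(2 * β)) :=
            Real.rpow_le_rpow_of_nonpos (Real.rpow_pos_of_pos h1t _) hbase (by linarith)
        _ = (1 + t) ^ (-β) := by
            rw [← Real.rpow_mul h1t.le, show ((1:ℝ)/2) * (-(2*β)) = -β by ring]
    -- tail estimate
    have hdomtail : ∀ x : ℝ, x ∉ A →
        ‖(V x:ℂ) * u x * (h x:ℂ)‖ ≤ C₀ * (1 + t) ^ (-β) * (‖u x‖ * |h x|) := by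
      intro x hx
      rw [hfnorm x]
      have h1 : |V x| ≤ C₀ * (1 + t) ^ (-β) := by
        refine le_trans (hVb x) ?_
        exact mul_le_mul_of_nonneg_left (htailw x hx) hC₀.le
      calc |V x| * ‖u x‖ * |h x| ≤ (C₀ * (1 + t) ^ (-β)) * ‖u x‖ * |h x| :=
            mul_le_mul_of_nonneg_right
              (mul_le_mul_of_nonneg_right h1 (norm_nonneg _)) (abs_nonneg _)
        _ = C₀ * (1 + t) ^ (-β) * (‖u x‖ * |h x|) := by ring
    have htail : ∫ x in Aᶜ, ‖(V x:ℂ) * u x * (h x:ℂ)‖ ≤ C₀ * (1 + t) ^ (-β) * N := by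
      have hrpownn : (0:ℝ) ≤ (1 + t) ^ (-β) := Real.rpow_nonneg h1t.le _
      calc ∫ x in Aᶜ, ‖(V x:ℂ) * u x * (h x:ℂ)‖
          ≤ ∫ x in Aᶜ, C₀ * (1 + t) ^ (-β) * (‖u x‖ * |h x|) :=
            setIntegral_mono_on hfint.norm.integrableOn
              (((hg.const_mul _)).integrableOn) hAmeas.compl (fun x hx => hdomtail x hx)
        _ = C₀ * (1 + t) ^ (-β) * ∫ x in Aᶜ, ‖u x‖ * |h x| := integral_const_mul _ _
        _ ≤ C₀ * (1 + t) ^ (-β) * N := by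
            refine mul_le_mul_of_nonneg_left ?_ (by positivity)
            exact le_trans (setIntegral_le_integral hg hgnn) hCS
    -- assemble
    have hsplit : ∫ x : ℝ, ‖(V x:ℂ) * u x * (h x:ℂ)‖ =
        (∫ x in A, ‖(V x:ℂ) * u x * (h x:ℂ)‖) + ∫ x in Aᶜ, ‖(V x:ℂ) * u x * (h x:ℂ)‖ :=
      (integral_add_compl hAmeas hfint.norm).symm
    have hrpownn : (0:ℝ) ≤ (1 + t) ^ (-β) := Real.rpow_nonneg h1t.le _
    have hCp12 : (0:ℝ) ≤ Cp ^ (1/(2:ℝ)) := Real.rpow_nonneg hCp0.le _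
    have h21b : (0:ℝ) ≤ (21:ℝ) ^ β := (Real.rpow_pos_of_pos (by norm_num) _).le
    calc ‖∫ x : ℝ, (V x:ℂ) * u x * (h x:ℂ)‖
        ≤ ∫ x : ℝ, ‖(V x:ℂ) * u x * (h x:ℂ)‖ := norm_integral_le_integral_norm _
      _ = (∫ x in A, ‖(V x:ℂ) * u x * (h x:ℂ)‖) + ∫ x in Aᶜ, ‖(V x:ℂ) * u x * (h x:ℂ)‖ :=
          hsplit
      _ ≤ C₀ * (N * (Cp ^ (1/(2:ℝ)) * (1 + t) ^ (-β))) + C₀ * (1 + t) ^ (-β) * N :=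
          add_le_add hbulk htail
      _ ≤ ((21:ℝ) ^ β + 1 + Cp ^ (1/(2:ℝ))) * C₀ * N * (1 + t) ^ (-β) := by
          nlinarith [mul_nonneg h21b (mul_nonneg (mul_nonneg hC₀.le hN0) hrpownn)]
  · -- trivial case: t < 20
    have hb1 : ‖∫ x : ℝ, (V x : ℂ) * u x * (h x : ℂ)‖ ≤ C₀ * N := by
      calc ‖∫ x : ℝ, (V x : ℂ) * u x * (h x : ℂ)‖
          ≤ ∫ x : ℝ, ‖(V x : ℂ) * u x * (h x : ℂ)‖ := norm_integral_le_integral_norm _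
        _ ≤ ∫ x : ℝ, C₀ * (‖u x‖ * |h x|) :=
            integral_mono hfint.norm (hg.const_mul C₀) hdom
        _ = C₀ * ∫ x : ℝ, ‖u x‖ * |h x| := integral_const_mul _ _
        _ ≤ C₀ * N := mul_le_mul_of_nonneg_left hCS hC₀.le
    have h21 : (1:ℝ) + t ≤ 21 := by linarith
    have hr1 : (21:ℝ) ^ (-β) ≤ (1 + t) ^ (-β) :=
      Real.rpow_le_rpow_of_nonpos h1t h21 (by linarith)
    have hr2 : (21:ℝ) ^ β * (21:ℝ) ^ (-β) = 1 := by
      rw [← Real.rpow_add (by norm_num)]; simp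
    have hr3 : (1:ℝ) ≤ ((21:ℝ) ^ β + 1 + Cp ^ (1/(2:ℝ))) * (1 + t) ^ (-β) := by
      have h21b : (0:ℝ) < (21:ℝ) ^ β := Real.rpow_pos_of_pos (by norm_num) _
      have hCp12 : (0:ℝ) ≤ Cp ^ (1/(2:ℝ)) := Real.rpow_nonneg hCp0.le _
      nlinarith [hr1, hr2, h21b, hCp12, Real.rpow_nonneg (by linarith : (0:ℝ) ≤ 1+t) (-β)]
    calc ‖∫ x : ℝ, (V x : ℂ) * u x * (h x : ℂ)‖ ≤ C₀ * N := hb1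
      _ = C₀ * N * 1 := (mul_one _).symm
      _ ≤ C₀ * N * (((21:ℝ) ^ β + 1 + Cp ^ (1/(2:ℝ))) * (1 + t) ^ (-β)) :=
          mul_le_mul_of_nonneg_left hr3 (by positivity)
      _ = ((21:ℝ) ^ β + 1 + Cp ^ (1/(2:ℝ))) * C₀ * N * (1 + t) ^ (-β) := by ring
end

section
/- Let β ≥ 1. There exists a constant K > 0 depending only on β such that the following holds: for all maps A, B : ℕ₊ × ℕ₊ → M₂(ℂ) (2×2 complex matrices) and all constants a, b ≥ 0 satisfying, for all i, j ≥ 1, ‖A(i,j)‖_{HS} ≤ a / ((1+log i)^β (1+log j)^β (1+|i-j|)) and ‖B(i,j)‖_{HS} ≤ b / ((1+log i)^β (1+log j)^β (1+|i-j|)), where ‖·‖_{HS} is the Hilbert–Schmidt (Frobenius) norm, the series Σ_{k≥1} A(j,k)·B(k,l) converges absolutely for all j, l ≥ 1 and its sum (A·B)(j,l) satisfies ‖(A·B)(j,l)‖_{HS} ≤ K·a·b / ((1+log j)^β (1+log l)^β (1+|j-l|)). -/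
open scoped BigOperators

set_option maxHeartbeats 1000000

/-- The Hilbert–Schmidt (Frobenius) norm of a 2×2 complex matrix. -/
noncomputable def hsNorm (M : Matrix (Fin 2) (Fin 2) ℂ) : ℝ :=
  Real.sqrt (∑ i : Fin 2, ∑ j : Fin 2, ‖M i j‖ ^ 2)



lemma hs_nonneg (M : Matrix (Fin 2) (Fin 2) ℂ) : 0 ≤ hsNorm M := Real.sqrt_nonneg _

lemma entry_le_hs (M : Matrix (Fin 2) (Fin 2) ℂ) (i j : Fin 2) : ‖M i j‖ ≤ hsNorm M := by
  have h1 : ‖M i j‖ ^ 2 ≤ ∑ j' : Fin 2, ‖M i j'‖ ^ 2 :=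
    Finset.single_le_sum (f := fun j' => ‖M i j'‖ ^ 2) (fun j' _ => sq_nonneg _) (Finset.mem_univ j)
  have h2 : (∑ j' : Fin 2, ‖M i j'‖ ^ 2) ≤ ∑ i' : Fin 2, ∑ j' : Fin 2, ‖M i' j'‖ ^ 2 :=
    Finset.single_le_sum (f := fun i' => ∑ j' : Fin 2, ‖M i' j'‖ ^ 2) (fun i' _ => Finset.sum_nonneg fun _ _ => sq_nonneg _)
      (Finset.mem_univ i)
  calc ‖M i j‖ = Real.sqrt (‖M i j‖ ^ 2) := (Real.sqrt_sq (norm_nonneg _)).symm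
    _ ≤ hsNorm M := Real.sqrt_le_sqrt (h1.trans h2)

lemma hs_le_sum_entries (M : Matrix (Fin 2) (Fin 2) ℂ) :
    hsNorm M ≤ ∑ i : Fin 2, ∑ j : Fin 2, ‖M i j‖ := by
  have h : (∑ i : Fin 2, ∑ j : Fin 2, ‖M i j‖ ^ 2) ≤
      (∑ i : Fin 2, ∑ j : Fin 2, ‖M i j‖) ^ 2 := by
    simp only [Fin.sum_univ_two]
    nlinarith [norm_nonneg (M 0 0), norm_nonneg (M 0 1), norm_nonneg (M 1 0),
      norm_nonneg (M 1 1)]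
  calc hsNorm M ≤ Real.sqrt ((∑ i : Fin 2, ∑ j : Fin 2, ‖M i j‖) ^ 2) := Real.sqrt_le_sqrt h
    _ = _ := Real.sqrt_sq (by positivity)

lemma hs_mul_le (M N : Matrix (Fin 2) (Fin 2) ℂ) :
    hsNorm (M * N) ≤ hsNorm M * hsNorm N := by
  have key : (∑ i : Fin 2, ∑ j : Fin 2, ‖(M * N) i j‖ ^ 2) ≤
      (∑ i : Fin 2, ∑ j : Fin 2, ‖M i j‖ ^ 2) * (∑ i : Fin 2, ∑ j : Fin 2, ‖N i j‖ ^ 2) := by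
    have hent : ∀ i j : Fin 2, ‖(M * N) i j‖ ≤ ‖M i 0‖ * ‖N 0 j‖ + ‖M i 1‖ * ‖N 1 j‖ := by
      intro i j
      rw [Matrix.mul_apply, Fin.sum_univ_two]
      calc ‖M i 0 * N 0 j + M i 1 * N 1 j‖ ≤ ‖M i 0 * N 0 j‖ + ‖M i 1 * N 1 j‖ := norm_add_le _ _
        _ = ‖M i 0‖ * ‖N 0 j‖ + ‖M i 1‖ * ‖N 1 j‖ := by rw [norm_mul, norm_mul]
    have hsq : ∀ i j : Fin 2, ‖(M * N) i j‖ ^ 2 ≤ (‖M i 0‖ * ‖N 0 j‖ + ‖M i 1‖ * ‖N 1 j‖) ^ 2 := by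
      intro i j
      have := hent i j
      nlinarith [norm_nonneg ((M * N) i j), norm_nonneg (M i 0), norm_nonneg (M i 1),
        norm_nonneg (N 0 j), norm_nonneg (N 1 j), mul_nonneg (norm_nonneg (M i 0)) (norm_nonneg (N 0 j))]
    simp only [Fin.sum_univ_two]
    nlinarith [hsq 0 0, hsq 0 1, hsq 1 0, hsq 1 1,
      sq_nonneg (‖M 0 0‖ * ‖N 0 1‖ - ‖M 0 1‖ * ‖N 0 0‖),
      sq_nonneg (‖M 0 0‖ * ‖N 0 0‖ - ‖M 0 1‖ * ‖N 0 0‖),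
      sq_nonneg (‖M 0 0‖ * ‖N 1 0‖ - ‖M 0 1‖ * ‖N 0 0‖),
      sq_nonneg (‖M 0 0‖ * ‖N 1 1‖ - ‖M 0 1‖ * ‖N 0 1‖),
      sq_nonneg (‖M 0 0‖ * ‖N 1 0‖ - ‖M 0 1‖ * ‖N 0 0‖),
      sq_nonneg (‖M 1 0‖ * ‖N 1 0‖ - ‖M 1 1‖ * ‖N 0 0‖),
      sq_nonneg (‖M 1 0‖ * ‖N 1 1‖ - ‖M 1 1‖ * ‖N 0 1‖)]
  calc hsNorm (M * N) = Real.sqrt (∑ i : Fin 2, ∑ j : Fin 2, ‖(M * N) i j‖ ^ 2) := rfl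
    _ ≤ Real.sqrt ((∑ i : Fin 2, ∑ j : Fin 2, ‖M i j‖ ^ 2) * (∑ i : Fin 2, ∑ j : Fin 2, ‖N i j‖ ^ 2)) :=
      Real.sqrt_le_sqrt key
    _ = hsNorm M * hsNorm N := by
      rw [Real.sqrt_mul (by positivity)]; rfl


noncomputable def tln (n : ℕ) : ℝ := 1 / ((n : ℝ) * (1 + Real.log n) ^ 2)

lemma tln_summable : Summable tln := by
  have h_nonneg : ∀ n, 0 ≤ tln n := by
    intro n
    unfold tln
    rcases Nat.eq_zero_or_pos n with h | h
    · simp [h]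
    · have h1 : (1:ℝ) ≤ (n:ℝ) := by exact_mod_cast h
      have h2 : 0 ≤ Real.log n := Real.log_nonneg h1
      positivity
  have h_mono : ∀ ⦃m n : ℕ⦄, 0 < m → m ≤ n → tln n ≤ tln m := by
    intro m n hm hmn
    unfold tln
    have hm1 : (1:ℝ) ≤ (m:ℝ) := by exact_mod_cast hm
    have hlm : 0 ≤ Real.log m := Real.log_nonneg hm1
    have hln : Real.log m ≤ Real.log n :=
      Real.log_le_log (by linarith) (by exact_mod_cast hmn)
    have hmn' : (m:ℝ) ≤ (n:ℝ) := by exact_mod_cast hmn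
    apply one_div_le_one_div_of_le
    · positivity
    · have h2 : (1 + Real.log m) ^ 2 ≤ (1 + Real.log n) ^ 2 := by nlinarith
      nlinarith
  rw [← summable_condensed_iff_of_nonneg h_nonneg h_mono]
  have hcond : ∀ k : ℕ, (2:ℝ) ^ k * tln (2 ^ k) = 1 / (1 + k * Real.log 2) ^ 2 := by
    intro k
    unfold tln
    have hcast : ((2 ^ k : ℕ) : ℝ) = (2:ℝ) ^ k := by push_cast; ring
    rw [hcast, Real.log_pow]
    have h2k : (0:ℝ) < 2 ^ k := by positivity
    have hlog : (0:ℝ) ≤ k * Real.log 2 := by positivity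
    field_simp
  have hsum : Summable (fun k : ℕ => 1 / (1 + (k:ℝ) * Real.log 2) ^ 2) := by
    have base : Summable (fun n : ℕ => 1 / (n : ℝ) ^ 2) :=
      Real.summable_one_div_nat_pow.mpr one_lt_two
    have shifted : Summable (fun n : ℕ => 1 / ((n : ℝ) + 1) ^ 2) := by
      have := (summable_nat_add_iff (f := fun n : ℕ => 1 / (n : ℝ) ^ 2) 1).mpr base
      simpa using this
    apply Summable.of_nonneg_of_le (fun k => by positivity) _ (shifted.mul_left 4)
    intro k
    have hl2 : (0.6931471803 : ℝ) < Real.log 2 := Real.log_two_gt_d9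
    have hk : (0:ℝ) ≤ (k:ℝ) := Nat.cast_nonneg k
    have hpos : (0:ℝ) < 1 + (k:ℝ) * Real.log 2 := by nlinarith
    have hge : ((k:ℝ) + 1) / 2 ≤ 1 + (k:ℝ) * Real.log 2 := by nlinarith
    have h4 : 4 * (1 / (((k:ℝ) + 1) ^ 2)) = 4 / (((k:ℝ) + 1) ^ 2) := by ring
    rw [h4, div_le_div_iff₀ (by positivity) (by positivity)]
    nlinarith
  apply hsum.congr
  intro k
  exact (hcond k).symm




noncomputable def phi (m k : ℕ+) : ℝ := 1 / ((1 + Real.log k) ^ 2 * (1 + |(m : ℝ) - (k : ℝ)|))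

noncomputable def Tconst : ℝ := ∑' k : ℕ+, tln k

-- basic positivity facts
lemma pnat_one_le_real (k : ℕ+) : (1 : ℝ) ≤ (k : ℝ) := by exact_mod_cast k.one_le

lemma log_nonneg' (k : ℕ+) : 0 ≤ Real.log (k : ℝ) := Real.log_nonneg (pnat_one_le_real k)

lemma L_one_le (k : ℕ+) : (1 : ℝ) ≤ 1 + Real.log (k : ℝ) := by linarith [log_nonneg' k]

lemma D_one_le (m k : ℕ+) : (1 : ℝ) ≤ 1 + |(m : ℝ) - (k : ℝ)| := by
  have := abs_nonneg ((m : ℝ) - (k : ℝ)); linarith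

lemma phi_nonneg (m k : ℕ+) : 0 ≤ phi m k := by
  unfold phi
  have h1 := L_one_le k
  have h2 := D_one_le m k
  positivity

lemma tln_pnat_summable : Summable (fun k : ℕ+ => tln k) :=
  tln_summable.comp_injective PNat.coe_injective

lemma Tconst_nonneg : 0 ≤ Tconst := by
  apply tsum_nonneg
  intro k
  unfold tln
  have h1 := pnat_one_le_real k
  have h2 := log_nonneg' k
  positivity

-- tail estimate
lemma phi_tail_le (m k : ℕ+) (h : 2 * m < k) : phi m k ≤ 2 * tln k := by
  have hk1 := pnat_one_le_real k
  have hm1 := pnat_one_le_real m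
  have hL := L_one_le k
  have hcast : ((2 * m : ℕ+) : ℝ) = 2 * (m : ℝ) := by
    push_cast; ring
  have h2m : 2 * (m : ℝ) < (k : ℝ) := by
    rw [← hcast]; exact_mod_cast h
  have habs : |(m : ℝ) - (k : ℝ)| = (k : ℝ) - m := by
    rw [abs_sub_comm]; exact abs_of_nonneg (by linarith)
  have hge : (k : ℝ) / 2 ≤ 1 + |(m : ℝ) - (k : ℝ)| := by
    rw [habs]; linarith
  unfold phi tln
  rw [mul_one_div, div_le_div_iff₀ (by positivity) (by positivity)]
  have hlog : Real.log ((k : ℕ) : ℝ) = Real.log (k : ℝ) := by norm_cast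
  have hkk : ((k : ℕ) : ℝ) = (k : ℝ) := by norm_cast
  rw [hlog, hkk]
  nlinarith [sq_nonneg (1 + Real.log (k:ℝ)), mul_le_mul_of_nonneg_left hge
    (by positivity : (0:ℝ) ≤ 2 * (1 + Real.log (k:ℝ))^2)]

lemma phi_summable (m : ℕ+) : Summable (phi m) := by
  rw [← (Finset.Icc 1 (2 * m)).summable_compl_iff]
  refine Summable.of_nonneg_of_le (fun x => phi_nonneg m _) (fun x => ?_)
    ((tln_pnat_summable.mul_left 2).comp_injective Subtype.coe_injective)
  apply phi_tail_le
  have hx := x.2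
  rw [Finset.mem_Icc] at hx
  push_neg at hx
  exact hx x.1.one_le


lemma harm_real (n : ℕ) : ∑ d ∈ Finset.range n, 1 / ((d : ℝ) + 1) ≤ 1 + Real.log n := by
  have h := harmonic_le_one_add_log n
  have he : ((harmonic n : ℚ) : ℝ) = ∑ d ∈ Finset.range n, 1 / ((d : ℝ) + 1) := by
    unfold harmonic
    push_cast
    apply Finset.sum_congr rfl
    intro d _
    rw [one_div]
  linarith [he ▸ h]

lemma harm_sum (m : ℕ+) :
    ∑ k ∈ Finset.Icc (1 : ℕ+) (2 * m), 1 / (1 + |(m : ℝ) - (k : ℝ)|) ≤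
      2 * (1 + Real.log ((m : ℝ) + 1)) := by
  have h2m : m ≤ 2 * m := by
    rw [← PNat.coe_le_coe]; push_cast; omega
  have hsplit : Finset.Icc (1 : ℕ+) (2 * m) = Finset.Icc 1 m ∪ Finset.Ioc m (2 * m) := by
    rw [← Finset.coe_inj]
    simp only [Finset.coe_union, Finset.coe_Icc, Finset.coe_Ioc]
    rw [Set.Icc_union_Ioc_eq_Icc m.one_le h2m]
  have hdisj : Disjoint (Finset.Icc (1 : ℕ+) m) (Finset.Ioc m (2 * m)) := by
    rw [Finset.disjoint_left]
    intro k hk hk'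
    rw [Finset.mem_Icc] at hk
    rw [Finset.mem_Ioc] at hk'
    exact absurd hk.2 (not_le.mpr hk'.1)
  rw [hsplit, Finset.sum_union hdisj]
  have hA : ∑ k ∈ Finset.Icc (1 : ℕ+) m, 1 / (1 + |(m : ℝ) - (k : ℝ)|) ≤
      1 + Real.log ((m : ℕ) : ℝ) := by
    have step1 : ∀ k ∈ Finset.Icc (1 : ℕ+) m,
        1 / (1 + |(m : ℝ) - (k : ℝ)|) = 1 / ((((m : ℕ) - (k : ℕ) : ℕ) : ℝ) + 1) := by
      intro k hk
      rw [Finset.mem_Icc] at hk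
      have hkm : (k : ℕ) ≤ (m : ℕ) := by exact_mod_cast hk.2
      have hc : (((m : ℕ) - (k : ℕ) : ℕ) : ℝ) = (m : ℝ) - (k : ℝ) := by
        push_cast [Nat.cast_sub hkm]; ring
      have hnn : (0 : ℝ) ≤ (m : ℝ) - (k : ℝ) := by
        have : ((k : ℕ) : ℝ) ≤ ((m : ℕ) : ℝ) := by exact_mod_cast hkm
        simpa using this
      rw [hc, abs_of_nonneg hnn]
      ring_nf
    have hinj : ∀ x ∈ Finset.Icc (1 : ℕ+) m, ∀ y ∈ Finset.Icc (1 : ℕ+) m,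
        (m : ℕ) - (x : ℕ) = (m : ℕ) - (y : ℕ) → x = y := by
      intro x hx y hy hxy
      rw [Finset.mem_Icc] at hx hy
      have hx2 : (x : ℕ) ≤ (m : ℕ) := by exact_mod_cast hx.2
      have hy2 : (y : ℕ) ≤ (m : ℕ) := by exact_mod_cast hy.2
      have : (x : ℕ) = (y : ℕ) := by omega
      exact PNat.coe_injective this
    have himg : ∑ x ∈ (Finset.Icc (1:ℕ+) m).image (fun k : ℕ+ => (m : ℕ) - (k : ℕ)),
        (1:ℝ) / ((x : ℝ) + 1) = ∑ k ∈ Finset.Icc (1:ℕ+) m,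
        (1:ℝ) / ((((m : ℕ) - (k : ℕ) : ℕ) : ℝ) + 1) := Finset.sum_image hinj
    rw [Finset.sum_congr rfl step1, ← himg]
    refine le_trans (Finset.sum_le_sum_of_subset_of_nonneg ?_ ?_) (harm_real (m : ℕ))
    · intro d hd
      rw [Finset.mem_image] at hd
      obtain ⟨k, hk, rfl⟩ := hd
      rw [Finset.mem_Icc] at hk
      have hk1 : 1 ≤ (k : ℕ) := k.one_le
      have hk2 : (k : ℕ) ≤ (m : ℕ) := by exact_mod_cast hk.2
      rw [Finset.mem_range]
      omega
    · intro d _ _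
      positivity
  have hB : ∑ k ∈ Finset.Ioc m (2 * m), 1 / (1 + |(m : ℝ) - (k : ℝ)|) ≤
      1 + Real.log (((m : ℕ) + 1 : ℕ) : ℝ) := by
    have step1 : ∀ k ∈ Finset.Ioc m (2 * m),
        1 / (1 + |(m : ℝ) - (k : ℝ)|) = 1 / ((((k : ℕ) - (m : ℕ) : ℕ) : ℝ) + 1) := by
      intro k hk
      rw [Finset.mem_Ioc] at hk
      have hkm : (m : ℕ) ≤ (k : ℕ) := le_of_lt (by exact_mod_cast hk.1)
      have hc : (((k : ℕ) - (m : ℕ) : ℕ) : ℝ) = (k : ℝ) - (m : ℝ) := by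
        push_cast [Nat.cast_sub hkm]; ring
      have hnn : (0 : ℝ) ≤ (k : ℝ) - (m : ℝ) := by
        have : ((m : ℕ) : ℝ) ≤ ((k : ℕ) : ℝ) := by exact_mod_cast hkm
        simpa using this
      rw [abs_sub_comm, abs_of_nonneg hnn, hc]
      ring_nf
    have hinj : ∀ x ∈ Finset.Ioc m (2 * m), ∀ y ∈ Finset.Ioc m (2 * m),
        (x : ℕ) - (m : ℕ) = (y : ℕ) - (m : ℕ) → x = y := by
      intro x hx y hy hxy
      rw [Finset.mem_Ioc] at hx hy
      have hx1 : (m : ℕ) < (x : ℕ) := by exact_mod_cast hx.1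
      have hy1 : (m : ℕ) < (y : ℕ) := by exact_mod_cast hy.1
      have : (x : ℕ) = (y : ℕ) := by omega
      exact PNat.coe_injective this
    have himg : ∑ x ∈ (Finset.Ioc m (2 * m)).image (fun k : ℕ+ => (k : ℕ) - (m : ℕ)),
        (1:ℝ) / ((x : ℝ) + 1) = ∑ k ∈ Finset.Ioc m (2 * m),
        (1:ℝ) / ((((k : ℕ) - (m : ℕ) : ℕ) : ℝ) + 1) := Finset.sum_image hinj
    rw [Finset.sum_congr rfl step1, ← himg]
    refine le_trans (Finset.sum_le_sum_of_subset_of_nonneg ?_ ?_) (harm_real ((m : ℕ) + 1))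
    · intro d hd
      rw [Finset.mem_image] at hd
      obtain ⟨k, hk, rfl⟩ := hd
      rw [Finset.mem_Ioc] at hk
      have hk1 : (m : ℕ) < (k : ℕ) := by exact_mod_cast hk.1
      have hk2 : (k : ℕ) ≤ ((2 * m : ℕ+) : ℕ) := by exact_mod_cast hk.2
      have h2 : ((2 * m : ℕ+) : ℕ) = 2 * (m : ℕ) := by push_cast; ring
      rw [Finset.mem_range]
      omega
    · intro d _ _
      positivity
  have hmono : Real.log ((m : ℕ) : ℝ) ≤ Real.log (((m : ℕ) + 1 : ℕ) : ℝ) := by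
    apply Real.log_le_log
    · exact_mod_cast m.pos
    · exact_mod_cast Nat.le_succ _
  have hcast : (((m : ℕ) + 1 : ℕ) : ℝ) = (m : ℝ) + 1 := by push_cast; ring
  rw [hcast] at hB hmono
  linarith

lemma tln_nonneg' (k : ℕ+) : 0 ≤ tln k := by
  unfold tln
  have h1 := pnat_one_le_real k
  have h2 := log_nonneg' k
  have h3 : (1:ℝ) ≤ ((k : ℕ) : ℝ) := by exact_mod_cast k.one_le
  have h4 : 0 ≤ Real.log ((k:ℕ):ℝ) := Real.log_nonneg h3
  positivity

lemma phi_finite_le (m : ℕ+) :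
    ∑ k ∈ Finset.Icc (1 : ℕ+) (2 * m), phi m k ≤ 18 := by
  set s0 : ℕ+ := ⟨Nat.sqrt m, Nat.sqrt_pos.mpr m.pos⟩ with hs0def
  have hs0n : (s0 : ℕ) = Nat.sqrt (m : ℕ) := rfl
  have hs0m : s0 ≤ m := by
    rw [← PNat.coe_le_coe, hs0n]; exact Nat.sqrt_le_self _
  have hs02m : s0 ≤ 2 * m := le_trans hs0m (by rw [← PNat.coe_le_coe]; push_cast; omega)
  have hsq : (s0 : ℝ) ^ 2 ≤ (m : ℝ) := by
    have h := Nat.sqrt_le' (m : ℕ)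
    rw [← hs0n] at h
    exact_mod_cast h
  have hlt : (m : ℝ) < ((s0 : ℝ) + 1) ^ 2 := by
    have h := Nat.lt_succ_sqrt' (m : ℕ)
    rw [← hs0n] at h
    exact_mod_cast h
  have hs01 : (1 : ℝ) ≤ (s0 : ℝ) := pnat_one_le_real s0
  have hm1 : (1 : ℝ) ≤ (m : ℝ) := pnat_one_le_real m
  have hlogm : 0 ≤ Real.log (m : ℝ) := log_nonneg' m
  -- split
  have hsplit : Finset.Icc (1 : ℕ+) (2 * m) = Finset.Icc 1 s0 ∪ Finset.Ioc s0 (2 * m) := by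
    rw [← Finset.coe_inj]
    simp only [Finset.coe_union, Finset.coe_Icc, Finset.coe_Ioc]
    rw [Set.Icc_union_Ioc_eq_Icc s0.one_le hs02m]
  have hdisj : Disjoint (Finset.Icc (1 : ℕ+) s0) (Finset.Ioc s0 (2 * m)) := by
    rw [Finset.disjoint_left]
    intro k hk hk'
    rw [Finset.mem_Icc] at hk
    rw [Finset.mem_Ioc] at hk'
    exact absurd hk.2 (not_le.mpr hk'.1)
  rw [hsplit, Finset.sum_union hdisj]
  -- piece 1
  have hp1 : ∑ k ∈ Finset.Icc (1 : ℕ+) s0, phi m k ≤ 2 := by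
    have hbnd : ∀ k ∈ Finset.Icc (1 : ℕ+) s0, phi m k ≤ 1 / (1 + ((m : ℝ) - (s0 : ℝ))) := by
      intro k hk
      rw [Finset.mem_Icc] at hk
      have hks : (k : ℝ) ≤ (s0 : ℝ) := by exact_mod_cast hk.2
      have hkm : (k : ℝ) ≤ (m : ℝ) := le_trans hks (by nlinarith)
      have habs : |(m : ℝ) - (k : ℝ)| = (m : ℝ) - (k : ℝ) := abs_of_nonneg (by linarith)
      have hL := L_one_le k
      have hD := D_one_le m k
      unfold phi
      apply one_div_le_one_div_of_le
      · nlinarith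
      · rw [habs]
        have hL2 : (1:ℝ) ≤ (1 + Real.log (k:ℝ)) ^ 2 := by nlinarith
        have h2 : 1 + ((m:ℝ) - (k:ℝ)) ≤ (1 + Real.log (k:ℝ)) ^ 2 * (1 + ((m:ℝ) - (k:ℝ))) :=
          le_mul_of_one_le_left (by linarith) hL2
        linarith
    calc ∑ k ∈ Finset.Icc (1 : ℕ+) s0, phi m k
        ≤ ∑ _k ∈ Finset.Icc (1 : ℕ+) s0, 1 / (1 + ((m : ℝ) - (s0 : ℝ))) :=
          Finset.sum_le_sum hbnd
      _ = ((Finset.Icc (1 : ℕ+) s0).card : ℝ) * (1 / (1 + ((m : ℝ) - (s0 : ℝ)))) := by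
          rw [Finset.sum_const, nsmul_eq_mul]
      _ ≤ 2 := by
          have hcard : (Finset.Icc (1 : ℕ+) s0).card = (s0 : ℕ) := by
            rw [PNat.card_Icc]; simp
          rw [hcard, mul_one_div, div_le_iff₀ (by nlinarith)]
          nlinarith [sq_nonneg ((s0 : ℝ) - 1)]
  -- piece 2
  have hp2 : ∑ k ∈ Finset.Ioc s0 (2 * m), phi m k ≤ 16 := by
    have hptw : ∀ k ∈ Finset.Ioc s0 (2 * m),
        phi m k ≤ 4 / (1 + Real.log (m : ℝ)) ^ 2 * (1 / (1 + |(m : ℝ) - (k : ℝ)|)) := by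
      intro k hk
      rw [Finset.mem_Ioc] at hk
      have hks : (s0 : ℝ) + 1 ≤ (k : ℝ) := by
        have : s0 + 1 ≤ k := hk.1
        exact_mod_cast this
      have hk1 : (1 : ℝ) ≤ (k : ℝ) := pnat_one_le_real k
      have hmk2 : (m : ℝ) ≤ (k : ℝ) ^ 2 := by nlinarith
      have hlogk : 0 ≤ Real.log (k : ℝ) := log_nonneg' k
      have hlml : Real.log (m : ℝ) ≤ 2 * Real.log (k : ℝ) := by
        calc Real.log (m : ℝ) ≤ Real.log ((k : ℝ) ^ 2) :=
              Real.log_le_log (by linarith) hmk2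
          _ = 2 * Real.log (k : ℝ) := by
              rw [Real.log_pow]; push_cast; ring
      have hLm : 1 + Real.log (m : ℝ) ≤ 2 * (1 + Real.log (k : ℝ)) := by linarith
      have hD := D_one_le m k
      have hLk := L_one_le k
      have hexp : (1 + Real.log (m:ℝ))^2 ≤ 4 * (1 + Real.log (k:ℝ))^2 := by nlinarith
      have hkey : (1 + Real.log (m:ℝ))^2 * (1 + |(m:ℝ) - (k:ℝ)|) ≤
          4 * ((1 + Real.log (k:ℝ))^2 * (1 + |(m:ℝ) - (k:ℝ)|)) := by
        have := mul_le_mul_of_nonneg_right hexp (le_trans zero_le_one hD)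
        linarith [this]
      have hXpos : (0:ℝ) < (1 + Real.log (k:ℝ))^2 * (1 + |(m:ℝ) - (k:ℝ)|) := by nlinarith
      have hYpos : (0:ℝ) < (1 + Real.log (m:ℝ))^2 * (1 + |(m:ℝ) - (k:ℝ)|) := by
        have hLm1 : (1:ℝ) ≤ 1 + Real.log (m:ℝ) := by linarith [log_nonneg' m]
        nlinarith
      have hfrac : phi m k ≤ 4 / ((1 + Real.log (m:ℝ))^2 * (1 + |(m:ℝ) - (k:ℝ)|)) := by
        unfold phi
        rw [div_le_div_iff₀ hXpos hYpos]
        linarith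
      refine le_trans hfrac (le_of_eq ?_)
      field_simp
    calc ∑ k ∈ Finset.Ioc s0 (2 * m), phi m k
        ≤ ∑ k ∈ Finset.Ioc s0 (2 * m),
            4 / (1 + Real.log (m : ℝ)) ^ 2 * (1 / (1 + |(m : ℝ) - (k : ℝ)|)) :=
          Finset.sum_le_sum hptw
      _ = 4 / (1 + Real.log (m : ℝ)) ^ 2 *
            ∑ k ∈ Finset.Ioc s0 (2 * m), 1 / (1 + |(m : ℝ) - (k : ℝ)|) := by
          rw [Finset.mul_sum]
      _ ≤ 4 / (1 + Real.log (m : ℝ)) ^ 2 *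
            ∑ k ∈ Finset.Icc (1 : ℕ+) (2 * m), 1 / (1 + |(m : ℝ) - (k : ℝ)|) := by
          apply mul_le_mul_of_nonneg_left _ (by positivity)
          apply Finset.sum_le_sum_of_subset_of_nonneg
          · intro k hk
            rw [Finset.mem_Ioc] at hk
            rw [Finset.mem_Icc]
            exact ⟨k.one_le, hk.2⟩
          · intro k _ _
            have := D_one_le m k
            positivity
      _ ≤ 4 / (1 + Real.log (m : ℝ)) ^ 2 * (2 * (1 + Real.log ((m : ℝ) + 1))) := by
          apply mul_le_mul_of_nonneg_left (harm_sum m) (by positivity)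
      _ ≤ 16 := by
          have hml : Real.log ((m : ℝ) + 1) ≤ 1 + Real.log (m : ℝ) := by
            calc Real.log ((m : ℝ) + 1) ≤ Real.log (2 * (m : ℝ)) :=
                  Real.log_le_log (by linarith) (by linarith)
              _ = Real.log 2 + Real.log (m : ℝ) := Real.log_mul two_ne_zero (by linarith)
              _ ≤ 1 + Real.log (m : ℝ) := by
                  have := Real.log_two_lt_d9
                  linarith
          rw [div_mul_eq_mul_div, div_le_iff₀ (by positivity)]
          nlinarith [sq_nonneg (Real.log (m:ℝ))]
  linarith

lemma phi_tsum_le (m : ℕ+) : ∑' k, phi m k ≤ 18 + 2 * Tconst := by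
  have hsum := phi_summable m
  rw [← Summable.sum_add_tsum_compl (s := Finset.Icc (1 : ℕ+) (2 * m)) hsum]
  have htail : ∑' x : ↑((Finset.Icc (1 : ℕ+) (2 * m) : Set ℕ+)ᶜ), phi m x ≤ 2 * Tconst := by
    have hl : Summable (fun x : ↑((Finset.Icc (1 : ℕ+) (2 * m) : Set ℕ+)ᶜ) => phi m x) :=
      hsum.subtype _
    have hr : Summable (fun x : ↑((Finset.Icc (1 : ℕ+) (2 * m) : Set ℕ+)ᶜ) => 2 * tln x) :=
      (tln_pnat_summable.mul_left 2).subtype _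
    have hle := Summable.tsum_le_tsum (f := fun x : ↑((Finset.Icc (1 : ℕ+) (2 * m) : Set ℕ+)ᶜ) => phi m x)
      (g := fun x => 2 * tln x) ?_ hl hr
    · refine le_trans hle ?_
      rw [tsum_mul_left]
      have h2 : ∑' x : ↑((Finset.Icc (1 : ℕ+) (2 * m) : Set ℕ+)ᶜ), tln ↑x ≤ Tconst := by
        have heq := Summable.sum_add_tsum_compl (s := Finset.Icc (1 : ℕ+) (2 * m)) tln_pnat_summable
        have hnn : 0 ≤ ∑ k ∈ Finset.Icc (1 : ℕ+) (2 * m), tln k :=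
          Finset.sum_nonneg fun k _ => tln_nonneg' k
        unfold Tconst
        linarith [heq]
      linarith
    · intro x
      apply phi_tail_le
      have hx := x.2
      simp only [Set.mem_compl_iff, Finset.coe_Icc, Set.mem_Icc, not_and, not_le] at hx
      exact hx x.1.one_le
  linarith [phi_finite_le m, htail]

lemma hs_tsum_le (M : ℕ+ → Matrix (Fin 2) (Fin 2) ℂ)
    (hs : Summable (fun k => hsNorm (M k))) :
    Summable M ∧ hsNorm (∑' k, M k) ≤ 4 * ∑' k, hsNorm (M k) := by
  have hnorm : ∀ i j : Fin 2, Summable (fun k => ‖M k i j‖) := fun i j =>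
    Summable.of_nonneg_of_le (fun k => norm_nonneg _) (fun k => entry_le_hs (M k) i j) hs
  have hentry : ∀ i j : Fin 2, Summable (fun k => M k i j) := fun i j =>
    Summable.of_norm (hnorm i j)
  have hM : Summable M := by
    apply Pi.summable.mpr
    intro i
    apply Pi.summable.mpr
    intro j
    exact hentry i j
  refine ⟨hM, ?_⟩
  have happly : ∀ i j : Fin 2, (∑' k, M k) i j = ∑' k, M k i j := by
    intro i j
    have h1 : (∑' k, M k) i = ∑' k, M k i := tsum_apply hM
    rw [h1]
    exact tsum_apply (Pi.summable.mp hM i)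
  have hij : ∀ i j : Fin 2, ‖(∑' k, M k) i j‖ ≤ ∑' k, hsNorm (M k) := by
    intro i j
    rw [happly i j]
    calc ‖∑' k, M k i j‖ ≤ ∑' k, ‖M k i j‖ := norm_tsum_le_tsum_norm (hnorm i j)
      _ ≤ ∑' k, hsNorm (M k) :=
        Summable.tsum_le_tsum (fun k => entry_le_hs (M k) i j) (hnorm i j) hs
  calc hsNorm (∑' k, M k) ≤ ∑ i : Fin 2, ∑ j : Fin 2, ‖(∑' k, M k) i j‖ :=
        hs_le_sum_entries _
    _ ≤ ∑ _i : Fin 2, ∑ _j : Fin 2, ∑' k, hsNorm (M k) :=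
        Finset.sum_le_sum fun i _ => Finset.sum_le_sum fun j _ => hij i j
    _ = 4 * ∑' k, hsNorm (M k) := by
        simp [Fin.sum_univ_two]
        ring

lemma g_le (j l k : ℕ+) :
    1 / ((1 + Real.log k) ^ 2 * (1 + |(j : ℝ) - (k : ℝ)|) * (1 + |(k : ℝ) - (l : ℝ)|)) ≤
      2 / (1 + |(j : ℝ) - (l : ℝ)|) * (phi j k + phi l k) := by
  have hL := L_one_le k
  have hDjk := D_one_le j k
  have hDkl' : (1:ℝ) ≤ 1 + |(k : ℝ) - (l : ℝ)| := by
    have := D_one_le l k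
    rwa [abs_sub_comm] at this
  have hDjl := D_one_le j l
  have htri : |(j : ℝ) - (l : ℝ)| ≤ |(j : ℝ) - (k : ℝ)| + |(k : ℝ) - (l : ℝ)| :=
    abs_sub_le _ _ _
  have hphil : phi l k = 1 / ((1 + Real.log k) ^ 2 * (1 + |(k : ℝ) - (l : ℝ)|)) := by
    unfold phi
    rw [abs_sub_comm]
  have hphij : phi j k = 1 / ((1 + Real.log k) ^ 2 * (1 + |(j : ℝ) - (k : ℝ)|)) := rfl
  set L2 := (1 + Real.log (k:ℝ)) ^ 2 with hL2def
  have hL2 : (1:ℝ) ≤ L2 := by nlinarith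
  set X := 1 + |(j : ℝ) - (k : ℝ)|
  set Y := 1 + |(k : ℝ) - (l : ℝ)|
  set Z := 1 + |(j : ℝ) - (l : ℝ)|
  have hcases : Z ≤ 2 * X ∨ Z ≤ 2 * Y := by
    rcases le_total (|(j : ℝ) - (k : ℝ)|) (|(k : ℝ) - (l : ℝ)|) with h | h
    · right
      simp only [Z, Y]
      have : |(j : ℝ) - (l : ℝ)| ≤ 2 * |(k : ℝ) - (l : ℝ)| := by linarith
      linarith
    · left
      simp only [Z, X]
      have : |(j : ℝ) - (l : ℝ)| ≤ 2 * |(j : ℝ) - (k : ℝ)| := by linarith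
      linarith
  have hphij_nn : 0 ≤ phi j k := phi_nonneg j k
  have hphil_nn : 0 ≤ phi l k := phi_nonneg l k
  have hL2pos : (0:ℝ) < L2 := by linarith
  have hXpos : (0:ℝ) < X := by linarith
  have hYpos : (0:ℝ) < Y := by linarith
  have hZpos : (0:ℝ) < Z := by linarith
  rcases hcases with h | h
  · -- use phi l k : 1/(L2 X Y) ≤ (2/Z) * (1/(L2 Y))
    have key : 1 / (L2 * X * Y) ≤ 2 / Z * (1 / (L2 * Y)) := by
      rw [mul_one_div, div_div, div_le_div_iff₀ (mul_pos (mul_pos hL2pos hXpos) hYpos)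
        (mul_pos hZpos (mul_pos hL2pos hYpos))]
      nlinarith [mul_le_mul_of_nonneg_right h (le_of_lt (mul_pos hL2pos hYpos))]
    calc 1 / (L2 * X * Y) ≤ 2 / Z * (1 / (L2 * Y)) := key
      _ = 2 / Z * phi l k := by rw [hphil]
      _ ≤ 2 / Z * (phi j k + phi l k) := by
          apply mul_le_mul_of_nonneg_left (by linarith) (le_of_lt (by positivity))
  · have key : 1 / (L2 * X * Y) ≤ 2 / Z * (1 / (L2 * X)) := by
      rw [mul_one_div, div_div, div_le_div_iff₀ (mul_pos (mul_pos hL2pos hXpos) hYpos)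
        (mul_pos hZpos (mul_pos hL2pos hXpos))]
      nlinarith [mul_le_mul_of_nonneg_right h (le_of_lt (mul_pos hL2pos hXpos))]
    calc 1 / (L2 * X * Y) ≤ 2 / Z * (1 / (L2 * X)) := key
      _ = 2 / Z * phi j k := by rw [hphij]
      _ ≤ 2 / Z * (phi j k + phi l k) := by
          apply mul_le_mul_of_nonneg_left (by linarith) (le_of_lt (by positivity))

/-- Lemma 5.5: the product of two infinite matrices with logarithmic decay
again has logarithmic decay, `[A·B]_β ≲ [A]_β [B]_β`. -/
theorem matrix_product_log_decay (β : ℝ) (hβ : 1 ≤ β) :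
    ∃ K : ℝ, 0 < K ∧
      ∀ (A B : ℕ+ → ℕ+ → Matrix (Fin 2) (Fin 2) ℂ) (a b : ℝ), 0 ≤ a → 0 ≤ b →
      (∀ i j : ℕ+, hsNorm (A i j) ≤
        a / ((1 + Real.log i) ^ β * (1 + Real.log j) ^ β * (1 + |(i : ℝ) - (j : ℝ)|))) →
      (∀ i j : ℕ+, hsNorm (B i j) ≤
        b / ((1 + Real.log i) ^ β * (1 + Real.log j) ^ β * (1 + |(i : ℝ) - (j : ℝ)|))) →
      ∀ j l : ℕ+,
        Summable (fun k : ℕ+ => hsNorm (A j k * B k l)) ∧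
        Summable (fun k : ℕ+ => A j k * B k l) ∧
        hsNorm (∑' k : ℕ+, A j k * B k l) ≤
          K * a * b /
            ((1 + Real.log j) ^ β * (1 + Real.log l) ^ β * (1 + |(j : ℝ) - (l : ℝ)|)) := by
  set C0 : ℝ := 18 + 2 * Tconst with hC0
  have hC0pos : 0 < C0 := by have := Tconst_nonneg; simp only [hC0]; linarith
  refine ⟨16 * C0, by linarith, ?_⟩
  intro A B a b ha hb hA hB j l
  -- notation
  set Lj := 1 + Real.log (j : ℝ) with hLjdef
  set Ll := 1 + Real.log (l : ℝ) with hLldef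
  have hLj1 : (1:ℝ) ≤ Lj := L_one_le j
  have hLl1 : (1:ℝ) ≤ Ll := L_one_le l
  have hLjb : (0:ℝ) < Lj ^ β := Real.rpow_pos_of_pos (by linarith) β
  have hLlb : (0:ℝ) < Ll ^ β := Real.rpow_pos_of_pos (by linarith) β
  have hDjl : (1:ℝ) ≤ 1 + |(j : ℝ) - (l : ℝ)| := D_one_le j l
  set D := 1 + |(j : ℝ) - (l : ℝ)| with hDdef
  set c : ℝ := a * b / (Lj ^ β * Ll ^ β) with hcdef
  have hc_nn : 0 ≤ c := by positivity
  set G : ℕ+ → ℝ := fun k => c * (2 / D * (phi j k + phi l k)) with hGdef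
  have hG_summable : Summable G := by
    apply Summable.mul_left
    apply Summable.mul_left
    exact (phi_summable j).add (phi_summable l)
  -- pointwise bound
  have hpoint : ∀ k : ℕ+, hsNorm (A j k * B k l) ≤ G k := by
    intro k
    have hLk1 : (1:ℝ) ≤ 1 + Real.log (k : ℝ) := L_one_le k
    set Lk := 1 + Real.log (k : ℝ) with hLkdef
    have hLkb1 : Lk ≤ Lk ^ β := by
      calc Lk = Lk ^ (1:ℝ) := (Real.rpow_one Lk).symm
        _ ≤ Lk ^ β := Real.rpow_le_rpow_of_exponent_le hLk1 hβ
    have hLkb_pos : (0:ℝ) < Lk ^ β := Real.rpow_pos_of_pos (by linarith) β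
    set Djk := 1 + |(j : ℝ) - (k : ℝ)| with hDjkdef
    set Dkl := 1 + |(k : ℝ) - (l : ℝ)| with hDkldef
    have hDjk1 : (1:ℝ) ≤ Djk := D_one_le j k
    have hDkl1 : (1:ℝ) ≤ Dkl := by
      have := D_one_le l k
      rw [abs_sub_comm] at this
      exact this
    have h1 : hsNorm (A j k * B k l) ≤
        (a / (Lj ^ β * Lk ^ β * Djk)) * (b / (Lk ^ β * Ll ^ β * Dkl)) := by
      apply le_trans (hs_mul_le _ _)
      apply mul_le_mul (hA j k) (hB k l) (hs_nonneg _)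
      apply div_nonneg ha
      have hDjk0 : (0:ℝ) < Djk := by linarith
      exact le_of_lt (mul_pos (mul_pos hLjb hLkb_pos) hDjk0)
    have h2 : (a / (Lj ^ β * Lk ^ β * Djk)) * (b / (Lk ^ β * Ll ^ β * Dkl)) =
        c * (1 / (Lk ^ β * Lk ^ β * Djk * Dkl)) := by
      rw [hcdef]
      have hden : (Lj ^ β * Lk ^ β * Djk) * (Lk ^ β * Ll ^ β * Dkl) =
          (Lj ^ β * Ll ^ β) * (Lk ^ β * Lk ^ β * Djk * Dkl) := by ring
      calc a / (Lj ^ β * Lk ^ β * Djk) * (b / (Lk ^ β * Ll ^ β * Dkl))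
          = (a * b) / ((Lj ^ β * Lk ^ β * Djk) * (Lk ^ β * Ll ^ β * Dkl)) :=
            div_mul_div_comm a _ b _
        _ = (a * b) / ((Lj ^ β * Ll ^ β) * (Lk ^ β * Lk ^ β * Djk * Dkl)) := by rw [hden]
        _ = a * b / (Lj ^ β * Ll ^ β) * (1 / (Lk ^ β * Lk ^ β * Djk * Dkl)) := by
            rw [← div_div, div_eq_mul_one_div]
    have h3 : 1 / (Lk ^ β * Lk ^ β * Djk * Dkl) ≤ 1 / (Lk ^ 2 * Djk * Dkl) := by
      have hLk0 : (0:ℝ) < Lk := by linarith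
      have hDjk0 : (0:ℝ) < Djk := by linarith
      have hDkl0 : (0:ℝ) < Dkl := by linarith
      have hsq' : Lk ^ 2 ≤ Lk ^ β * Lk ^ β := by
        nlinarith [mul_le_mul hLkb1 hLkb1 (by linarith : (0:ℝ) ≤ Lk) (le_of_lt hLkb_pos)]
      have hDD : (0:ℝ) ≤ Djk * Dkl := le_of_lt (mul_pos hDjk0 hDkl0)
      apply one_div_le_one_div_of_le
      · exact mul_pos (mul_pos (by nlinarith) hDjk0) hDkl0
      · nlinarith [mul_le_mul_of_nonneg_right hsq' hDD]
    have h4 : 1 / (Lk ^ 2 * Djk * Dkl) ≤ 2 / D * (phi j k + phi l k) := g_le j l k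
    calc hsNorm (A j k * B k l) ≤ c * (1 / (Lk ^ β * Lk ^ β * Djk * Dkl)) := by
          rw [← h2]; exact h1
      _ ≤ c * (2 / D * (phi j k + phi l k)) :=
          mul_le_mul_of_nonneg_left (le_trans h3 h4) hc_nn
      _ = G k := rfl
  have hs_sum : Summable (fun k : ℕ+ => hsNorm (A j k * B k l)) :=
    Summable.of_nonneg_of_le (fun k => hs_nonneg _) hpoint hG_summable
  obtain ⟨hMsum, hMle⟩ := hs_tsum_le (fun k => A j k * B k l) hs_sum
  refine ⟨hs_sum, hMsum, ?_⟩
  have htsum_le : ∑' k, hsNorm (A j k * B k l) ≤ c * (2 / D * (2 * C0)) := by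
    calc ∑' k, hsNorm (A j k * B k l) ≤ ∑' k, G k := Summable.tsum_le_tsum hpoint hs_sum hG_summable
      _ = c * (2 / D * (∑' k, (phi j k + phi l k))) := by
          rw [hGdef]
          rw [tsum_mul_left, tsum_mul_left]
      _ ≤ c * (2 / D * (2 * C0)) := by
          apply mul_le_mul_of_nonneg_left _ hc_nn
          apply mul_le_mul_of_nonneg_left _ (by positivity)
          rw [Summable.tsum_add (phi_summable j) (phi_summable l)]
          have := phi_tsum_le j
          have := phi_tsum_le l
          have h2C0 : C0 = 18 + 2 * Tconst := hC0
          linarith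
  have hfinal : (4:ℝ) * (c * (2 / D * (2 * C0))) =
      16 * C0 * a * b / (Lj ^ β * Ll ^ β * D) := by
    rw [hcdef]
    field_simp
    ring
  calc hsNorm (∑' k : ℕ+, A j k * B k l) ≤ 4 * ∑' k, hsNorm (A j k * B k l) := hMle
    _ ≤ 4 * (c * (2 / D * (2 * C0))) := by linarith
    _ = 16 * C0 * a * b / (Lj ^ β * Ll ^ β * D) := hfinal
end

section
/- For every real β > 1 there exists a constant C(β) > 0, independent of j, such that for every integer j ≥ 1, Σ_{l=1}^∞ 1 / ((1+|j-l|)(1+log l)^β) ≤ C(β). -/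
open Real Finset



lemma log_gap (x : ℝ) (hx : 1 ≤ x) : 1/(x+1) ≤ Real.log (x+1) - Real.log x := by
  have hx0 : 0 < x := by linarith
  have hx1 : 0 < x + 1 := by linarith
  have h := Real.log_le_sub_one_of_pos (x := x/(x+1)) (by positivity)
  rw [Real.log_div (by positivity) (by positivity)] at h
  have : x/(x+1) - 1 = -(1/(x+1)) := by field_simp; ring
  linarith [this ▸ h]

lemma tangent {a b β : ℝ} (ha : 1 ≤ a) (hab : a ≤ b) (hβ : 1 < β) :
    (β-1)*(b-a)*b^(-β) ≤ a^(1-β) - b^(1-β) := by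
  have ha0 : 0 < a := by linarith
  have hb0 : 0 < b := by linarith
  set t : ℝ := a/b with ht
  have ht0 : 0 < t := by positivity
  have ht1 : t ≤ 1 := by rw [ht, div_le_one hb0]; exact hab
  have key : 1 + (β-1)*(1-t) ≤ t^(1-β) := by
    have h1 : Real.log t ≤ t - 1 := Real.log_le_sub_one_of_pos ht0
    have h2 : (1-β)*Real.log t + 1 ≤ Real.exp ((1-β)*Real.log t) := by
      linarith [Real.add_one_le_exp ((1-β)*Real.log t)]
    rw [Real.rpow_def_of_pos ht0, mul_comm (Real.log t)]
    nlinarith [h2, mul_le_mul_of_nonpos_left h1 (by linarith : (1-β) ≤ 0)]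
  have hmul : a^(1-β) = t^(1-β) * b^(1-β) := by
    rw [ht, Real.div_rpow ha0.le hb0.le, div_mul_cancel₀]
    positivity
  have hb1 : b^(1-β) = b * b^(-β) := by
    rw [show (1-β) = 1 + (-β) by ring, Real.rpow_add hb0, Real.rpow_one]
  have hbp : (0:ℝ) < b^(1-β) := Real.rpow_pos_of_pos hb0 _
  have h3 : (1 + (β-1)*(1-t)) * b^(1-β) ≤ t^(1-β) * b^(1-β) :=
    mul_le_mul_of_nonneg_right key hbp.le
  rw [← hmul] at h3
  have h4 : (1-t) * b = b - a := by rw [ht]; field_simp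
  calc (β-1)*(b-a)*b^(-β) = (β-1)*(1-t) * b^(1-β) := by rw [hb1]; rw [← h4]; ring
    _ ≤ a^(1-β) - b^(1-β) := by linarith



noncomputable def gfun (β : ℝ) (n : ℕ) : ℝ := 1/((n+1)*(1+Real.log (n+1))^β)

lemma log_nat_nonneg (n : ℕ) : (0:ℝ) ≤ Real.log (n+1) :=
  Real.log_nonneg (by exact_mod_cast Nat.le_add_left 1 n)

lemma gfun_nonneg (β : ℝ) (n : ℕ) : 0 ≤ gfun β n := by
  have h1 := log_nat_nonneg n
  unfold gfun; positivity

lemma gfun_partial (β : ℝ) (hβ : 1 < β) (N : ℕ) :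
    ∑ n ∈ range N, gfun β n ≤ 1 + 1/(β-1) := by
  have hb1 : (0:ℝ) < β - 1 := by linarith
  set h : ℕ → ℝ := fun m => (1 + Real.log (m+1))^(1-β) with hh
  have key : ∀ n : ℕ, gfun β (n+1) * (β-1) ≤ h n - h (n+1) := by
    intro n
    have ha : (1:ℝ) ≤ 1 + Real.log (n+1) := by linarith [log_nat_nonneg n]
    have hab : (1:ℝ) + Real.log ((n:ℝ)+1) ≤ 1 + Real.log ((n:ℝ)+2) := by
      have := Real.log_le_log (by positivity) (by linarith : ((n:ℝ)+1) ≤ ((n:ℝ)+2))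
      linarith
    have hgap : 1/((n:ℝ)+2) ≤ Real.log ((n:ℝ)+2) - Real.log ((n:ℝ)+1) := by
      have := log_gap ((n:ℝ)+1) (by linarith [Nat.cast_nonneg (α := ℝ) n])
      have e : ((n:ℝ)+1)+1 = (n:ℝ)+2 := by ring
      rw [e] at this; linarith
    have htan := tangent ha hab hβ
    have hbpos : (0:ℝ) < 1 + Real.log ((n:ℝ)+2) := by linarith
    have hrp : (0:ℝ) < ((1:ℝ) + Real.log ((n:ℝ)+2))^β := Real.rpow_pos_of_pos hbpos _
    have hrpn : (0:ℝ) < ((1:ℝ) + Real.log ((n:ℝ)+2))^(-β) := Real.rpow_pos_of_pos hbpos _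
    have hneg : ((1:ℝ) + Real.log ((n:ℝ)+2))^(-β) = 1/((1 + Real.log ((n:ℝ)+2))^β) := by
      rw [Real.rpow_neg hbpos.le, one_div]
    have hgf : gfun β (n+1) = 1/(((n:ℝ)+2) * (1 + Real.log ((n:ℝ)+2))^β) := by
      unfold gfun; push_cast; ring_nf
    have h3 : (β-1) * (1/(((n:ℝ)+2)) * (1 + Real.log ((n:ℝ)+2))^(-β))
        ≤ (β-1)*((1 + Real.log ((n:ℝ)+2)) - (1 + Real.log ((n:ℝ)+1)))*((1 + Real.log ((n:ℝ)+2))^(-β)) := by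
      have hg : 1/(((n:ℝ)+2)) ≤ (1 + Real.log ((n:ℝ)+2)) - (1 + Real.log ((n:ℝ)+1)) := by linarith
      nlinarith [mul_le_mul_of_nonneg_right hg hrpn.le]
    have h2 : (β-1)*((1 + Real.log ((n:ℝ)+2)) - (1 + Real.log ((n:ℝ)+1)))*((1 + Real.log ((n:ℝ)+2))^(-β))
        ≤ h n - h (n+1) := by
      simp only [hh]
      push_cast
      have harg : ((n:ℝ)+1)+1 = (n:ℝ)+2 := by ring
      rw [harg]
      exact htan
    have heq : gfun β (n+1) * (β-1) = (β-1) * (1/(((n:ℝ)+2)) * (1 + Real.log ((n:ℝ)+2))^(-β)) := by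
      rw [hgf, hneg]; field_simp
    rw [heq]
    exact h3.trans (by linarith [h2] : _)
  have htel : ∀ M : ℕ, ∑ n ∈ range M, gfun β (n+1) ≤ 1/(β-1) := by
    intro M
    have hsum : ∑ n ∈ range M, (h n - h (n+1)) = h 0 - h M := Finset.sum_range_sub' h M
    have h0 : h 0 = 1 := by simp [hh]
    have hM : 0 ≤ h M := Real.rpow_nonneg (by linarith [log_nat_nonneg M]) _
    have hle : ∑ n ∈ range M, gfun β (n+1) * (β-1) ≤ h 0 - h M := by
      rw [← hsum]; exact Finset.sum_le_sum (fun n _ => key n)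
    rw [← Finset.sum_mul] at hle
    rw [h0] at hle
    rw [le_div_iff₀ hb1]
    linarith
  cases N with
  | zero => simp; positivity
  | succ M =>
    rw [Finset.sum_range_succ']
    have hg0 : gfun β 0 ≤ 1 := by
      simp [gfun, Real.log_one]
    linarith [htel M, hg0]



lemma harmonic_le (M : ℕ) : ∑ n ∈ range M, 1/((n:ℝ)+1) ≤ 1 + Real.log M := by
  induction M with
  | zero => simp
  | succ M ih =>
    rw [Finset.sum_range_succ]
    rcases Nat.eq_zero_or_pos M with hM | hM
    · subst hM; simp
    · have h1 : (1:ℝ) ≤ M := by exact_mod_cast hM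
      have := log_gap (M:ℝ) h1
      push_cast
      push_cast at ih
      linarith





noncomputable def Ffun (β : ℝ) (J : ℕ) (n : ℕ) : ℝ :=
  1/((1 + |(J:ℝ) - ((n:ℝ)+1)|) * (1 + Real.log ((n:ℝ)+1))^β)

lemma onelog_pos (n : ℕ) : (0:ℝ) < 1 + Real.log ((n:ℝ)+1) := by
  have := log_nat_nonneg n; linarith

lemma Ffun_nonneg (β : ℝ) (J n : ℕ) : 0 ≤ Ffun β J n := by
  have h := onelog_pos n
  have habs : (0:ℝ) ≤ |(J:ℝ) - ((n:ℝ)+1)| := abs_nonneg _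
  unfold Ffun; positivity

lemma Ffun_le (β : ℝ) (J : ℕ) (hJ : 1 ≤ J) (n : ℕ) :
    Ffun β J n ≤ (2*J) * gfun β n := by
  have hlog := onelog_pos n
  have hrp : (0:ℝ) < (1 + Real.log ((n:ℝ)+1))^β := Real.rpow_pos_of_pos hlog _
  have habs : (0:ℝ) ≤ |(J:ℝ) - ((n:ℝ)+1)| := abs_nonneg _
  have hJ1 : (1:ℝ) ≤ (J:ℝ) := by exact_mod_cast hJ
  have key : 1/(1 + |(J:ℝ) - ((n:ℝ)+1)|) ≤ (2*J)/((n:ℝ)+1) := by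
    rcases le_or_gt ((n:ℕ)+1) (2*J) with h | h
    · have h' : ((n:ℝ)+1) ≤ 2*J := by exact_mod_cast h
      rw [div_le_div_iff₀ (by linarith) (by positivity)]
      nlinarith
    · have h' : 2*(J:ℝ) < ((n:ℝ)+1) := by exact_mod_cast h
      have habs2 : (J:ℝ) - ((n:ℝ)+1) ≤ 0 := by linarith
      rw [abs_of_nonpos habs2]
      rw [div_le_div_iff₀ (by linarith) (by positivity)]
      nlinarith
  have e1 : Ffun β J n = (1/(1 + |(J:ℝ) - ((n:ℝ)+1)|)) * (1/(1 + Real.log ((n:ℝ)+1))^β) := by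
    unfold Ffun; field_simp
  have e2 : (2*(J:ℝ)) * gfun β n = ((2*(J:ℝ))/((n:ℝ)+1)) * (1/(1 + Real.log ((n:ℝ)+1))^β) := by
    unfold gfun; field_simp
  rw [e1, e2]
  apply mul_le_mul_of_nonneg_right key (by positivity)

lemma Ffun_summable (β : ℝ) (hβ : 1 < β) (J : ℕ) (hJ : 1 ≤ J) : Summable (Ffun β J) := by
  have hg : Summable (gfun β) :=
    summable_of_sum_range_le (gfun_nonneg β) (gfun_partial β hβ)
  exact Summable.of_nonneg_of_le (Ffun_nonneg β J) (Ffun_le β J hJ) (hg.mul_left _)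

lemma Ffun_tail (β : ℝ) (J : ℕ) (hJ : 1 ≤ J) (n : ℕ) :
    Ffun β J (n + 2*J) ≤ 2 * gfun β (n + 2*J) := by
  have hlog := onelog_pos (n + 2*J)
  set m : ℕ := n + 2*J with hm
  have hrp' : (0:ℝ) < (1 + Real.log ((m:ℝ)+1))^β := Real.rpow_pos_of_pos hlog _
  have hJm : 2*(J:ℝ) ≤ (m:ℝ) + 1 := by
    have : 2*J ≤ m + 1 := by omega
    exact_mod_cast this
  have hJ1 : (1:ℝ) ≤ (J:ℝ) := by exact_mod_cast hJ
  have habs : (J:ℝ) - ((m:ℝ)+1) ≤ 0 := by linarith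
  have key : 1/(1 + |(J:ℝ) - ((m:ℝ)+1)|) ≤ 2/((m:ℝ)+1) := by
    rw [abs_of_nonpos habs, div_le_div_iff₀ (by linarith) (by linarith)]
    nlinarith
  have e1 : Ffun β J m = (1/(1 + |(J:ℝ) - ((m:ℝ)+1)|)) * (1/(1 + Real.log ((m:ℝ)+1))^β) := by
    unfold Ffun; field_simp
  have e2 : 2 * gfun β m = (2/((m:ℝ)+1)) * (1/(1 + Real.log ((m:ℝ)+1))^β) := by
    unfold gfun; field_simp
  rw [e1, e2]
  exact mul_le_mul_of_nonneg_right key (by positivity)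

lemma abs_harmonic (J : ℕ) (hJ : 1 ≤ J) :
    ∑ n ∈ range (2*J), 1/(1+|(J:ℝ)-((n:ℝ)+1)|) ≤ 2*(1+Real.log J) := by
  rw [two_mul, Finset.sum_range_add]
  have h1 : ∑ n ∈ range J, 1/(1+|(J:ℝ)-((n:ℝ)+1)|) ≤ 1 + Real.log J := by
    have e : ∀ n ∈ range J, 1/(1+|(J:ℝ)-((n:ℝ)+1)|) = 1/(((J-1-n:ℕ):ℝ)+1) := by
      intro n hn
      rw [Finset.mem_range] at hn
      have h2 : ((J-1-n:ℕ):ℝ) = (J:ℝ) - 1 - n := by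
        have : n + 1 ≤ J := hn
        push_cast [Nat.sub_sub, Nat.cast_sub (by omega : 1 + n ≤ J)]
        ring
      have hc : ((n:ℝ))+1 ≤ J := by exact_mod_cast hn
      rw [h2, abs_of_nonneg (by linarith)]
      ring_nf
    rw [Finset.sum_congr rfl e, Finset.sum_range_reflect (fun n => 1/((n:ℝ)+1)) J]
    exact harmonic_le J
  have h2 : ∑ n ∈ range J, 1/(1+|(J:ℝ)-(((J+n:ℕ):ℝ)+1)|) ≤ 1 + Real.log J := by
    have e : ∀ n ∈ range J, 1/(1+|(J:ℝ)-(((J+n:ℕ):ℝ)+1)|) ≤ 1/((n:ℝ)+1) := by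
      intro n hn
      have : |(J:ℝ)-(((J+n:ℕ):ℝ)+1)| = (n:ℝ)+1 := by
        push_cast
        rw [abs_of_nonpos (by linarith [Nat.cast_nonneg (α := ℝ) n])]
        ring
      rw [this]
      apply div_le_div_of_nonneg_left (by norm_num) (by positivity) (by linarith [Nat.cast_nonneg (α := ℝ) n])
    calc ∑ n ∈ range J, 1/(1+|(J:ℝ)-(((J+n:ℕ):ℝ)+1)|) ≤ ∑ n ∈ range J, 1/((n:ℝ)+1) :=
          Finset.sum_le_sum e
      _ ≤ 1 + Real.log J := harmonic_le J
  have : ∀ n ∈ range J, 1/(1+|(J:ℝ)-(((J+n:ℕ):ℝ)+1)|) = 1/(1+|(J:ℝ)-((((J+n):ℕ):ℝ)+1)|) := fun n _ => rfl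
  push_cast at h2 ⊢
  linarith

lemma Ffun_head (β : ℝ) (hβ : 1 < β) (J : ℕ) (hJ : 1 ≤ J) :
    ∑ n ∈ range (2*J), Ffun β J n ≤ 1 + 2*(2:ℝ)^β := by
  have hβ0 : (0:ℝ) ≤ β := by linarith
  have hJ1 : (1:ℝ) ≤ (J:ℝ) := by exact_mod_cast hJ
  have hlogJ : (0:ℝ) ≤ Real.log J := Real.log_nonneg hJ1
  classical
  rw [← Finset.sum_filter_add_sum_filter_not (range (2*J)) (fun n => (n+1)*(n+1) ≤ J)]
  set s : ℕ := Nat.sqrt J with hs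
  have hsJ : s*s ≤ J := Nat.sqrt_le J
  have hs1 : 1 ≤ s := Nat.le_sqrt.2 (by simpa using hJ)
  have hsle : s ≤ J := Nat.sqrt_le_self J
  -- Part 1
  have part1 : ∑ n ∈ (range (2*J)).filter (fun n => (n+1)*(n+1) ≤ J), Ffun β J n ≤ 1 := by
    have hsub : (range (2*J)).filter (fun n => (n+1)*(n+1) ≤ J) ⊆ range s := by
      intro n hn
      rw [Finset.mem_filter] at hn
      rw [Finset.mem_range]
      have : n + 1 ≤ s := Nat.le_sqrt.2 hn.2
      omega
    have hbound : ∀ n ∈ (range (2*J)).filter (fun n => (n+1)*(n+1) ≤ J),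
        Ffun β J n ≤ 1/(1+(J:ℝ)-s) := by
      intro n hn
      rw [Finset.mem_filter] at hn
      have hns : n + 1 ≤ s := Nat.le_sqrt.2 hn.2
      have hns' : ((n:ℝ)+1) ≤ (s:ℝ) := by exact_mod_cast hns
      have hsr : (s:ℝ) ≤ (J:ℝ) := by exact_mod_cast hsle
      have habs : |(J:ℝ) - ((n:ℝ)+1)| = (J:ℝ) - ((n:ℝ)+1) := abs_of_nonneg (by linarith)
      have hone : (1:ℝ) ≤ (1 + Real.log ((n:ℝ)+1))^β :=
        Real.one_le_rpow (by linarith [log_nat_nonneg n]) hβ0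
      have hd1 : (0:ℝ) < 1 + (J:ℝ) - s := by linarith
      have hd2 : (0:ℝ) < 1 + |(J:ℝ) - ((n:ℝ)+1)| := by positivity
      unfold Ffun
      rw [div_le_div_iff₀ (by nlinarith [Real.rpow_pos_of_pos (onelog_pos n) β]) hd1]
      rw [habs]
      nlinarith [Real.rpow_pos_of_pos (onelog_pos n) β]
    calc ∑ n ∈ (range (2*J)).filter (fun n => (n+1)*(n+1) ≤ J), Ffun β J n
        ≤ ∑ _n ∈ (range (2*J)).filter (fun n => (n+1)*(n+1) ≤ J), 1/(1+(J:ℝ)-s) :=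
          Finset.sum_le_sum hbound
      _ = ((range (2*J)).filter (fun n => (n+1)*(n+1) ≤ J)).card * (1/(1+(J:ℝ)-s)) := by
          rw [Finset.sum_const, nsmul_eq_mul]
      _ ≤ s * (1/(1+(J:ℝ)-s)) := by
          have hsr : (s:ℝ) ≤ (J:ℝ) := by exact_mod_cast hsle
          have hcard : (((range (2*J)).filter (fun n => (n+1)*(n+1) ≤ J)).card : ℝ) ≤ s := by
            have := Finset.card_le_card hsub
            rw [Finset.card_range] at this
            exact_mod_cast this
          have hnn : (0:ℝ) ≤ 1/(1+(J:ℝ)-s) := by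
            apply div_nonneg (by norm_num); linarith
          exact mul_le_mul_of_nonneg_right hcard hnn
      _ ≤ 1 := by
          have hsr : (s:ℝ) ≤ (J:ℝ) := by exact_mod_cast hsle
          have h2s : 2*(s:ℝ) ≤ (J:ℝ) + 1 := by
            have hn : 2*s ≤ J + 1 := by nlinarith [hsJ]
            exact_mod_cast hn
          rw [mul_one_div, div_le_one (by linarith)]
          linarith
  -- Part 2
  have part2 : ∑ n ∈ (range (2*J)).filter (fun n => ¬((n+1)*(n+1) ≤ J)), Ffun β J n
      ≤ 2*(2:ℝ)^β := by
    have hDpos : (0:ℝ) < (1 + Real.log J)/2 := by linarith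
    have hbound : ∀ n ∈ (range (2*J)).filter (fun n => ¬((n+1)*(n+1) ≤ J)),
        Ffun β J n ≤ ((2:ℝ)^β/(1+Real.log J)^β) * (1/(1+|(J:ℝ)-((n:ℝ)+1)|)) := by
      intro n hn
      rw [Finset.mem_filter] at hn
      have hJn : J ≤ (n+1)*(n+1) := le_of_not_ge hn.2
      have hJn' : (J:ℝ) ≤ ((n:ℝ)+1)*((n:ℝ)+1) := by exact_mod_cast hJn
      have hsqrt : Real.sqrt J ≤ (n:ℝ)+1 := by
        rw [show ((n:ℝ)+1)*((n:ℝ)+1) = ((n:ℝ)+1)^2 by ring] at hJn'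
        calc Real.sqrt J ≤ Real.sqrt (((n:ℝ)+1)^2) := Real.sqrt_le_sqrt hJn'
          _ = (n:ℝ)+1 := Real.sqrt_sq (by positivity)
      have hlogn : Real.log J / 2 ≤ Real.log ((n:ℝ)+1) := by
        rw [← Real.log_sqrt (by positivity)]
        exact Real.log_le_log (by positivity) hsqrt
      have hD : (1 + Real.log J)/2 ≤ 1 + Real.log ((n:ℝ)+1) := by linarith
      have hrpow : ((1 + Real.log J)/2)^β ≤ (1 + Real.log ((n:ℝ)+1))^β :=
        Real.rpow_le_rpow hDpos.le hD hβ0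
      have hdiv : ((1 + Real.log J)/2)^β = (1+Real.log J)^β/(2:ℝ)^β :=
        Real.div_rpow (by linarith) (by norm_num) β
      have h2p : (0:ℝ) < ((1 + Real.log J)/2)^β := Real.rpow_pos_of_pos hDpos _
      have habs : (0:ℝ) < 1 + |(J:ℝ)-((n:ℝ)+1)| := by positivity
      have hnp : (0:ℝ) < (1 + Real.log ((n:ℝ)+1))^β := Real.rpow_pos_of_pos (onelog_pos n) _
      unfold Ffun
      rw [div_le_iff₀ (by positivity)]
      have e : ((2:ℝ)^β/(1+Real.log J)^β) * (1/(1+|(J:ℝ)-((n:ℝ)+1)|))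
          * ((1 + |(J:ℝ)-((n:ℝ)+1)|) * (1 + Real.log ((n:ℝ)+1))^β)
          = (1 + Real.log ((n:ℝ)+1))^β / ((1 + Real.log J)^β/(2:ℝ)^β) := by
        field_simp
      rw [e, ← hdiv, le_div_iff₀ h2p]
      nlinarith
    calc ∑ n ∈ (range (2*J)).filter (fun n => ¬((n+1)*(n+1) ≤ J)), Ffun β J n
        ≤ ∑ n ∈ (range (2*J)).filter (fun n => ¬((n+1)*(n+1) ≤ J)),
            ((2:ℝ)^β/(1+Real.log J)^β) * (1/(1+|(J:ℝ)-((n:ℝ)+1)|)) :=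
          Finset.sum_le_sum hbound
      _ ≤ ∑ n ∈ range (2*J), ((2:ℝ)^β/(1+Real.log J)^β) * (1/(1+|(J:ℝ)-((n:ℝ)+1)|)) := by
          apply Finset.sum_le_sum_of_subset_of_nonneg (Finset.filter_subset _ _)
          intro n _ _
          have : (0:ℝ) < 1 + |(J:ℝ)-((n:ℝ)+1)| := by positivity
          positivity
      _ = ((2:ℝ)^β/(1+Real.log J)^β) * ∑ n ∈ range (2*J), 1/(1+|(J:ℝ)-((n:ℝ)+1)|) := by
          rw [Finset.mul_sum]
      _ ≤ ((2:ℝ)^β/(1+Real.log J)^β) * (2*(1+Real.log J)) := by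
          apply mul_le_mul_of_nonneg_left (abs_harmonic J hJ) (by positivity)
      _ ≤ 2*(2:ℝ)^β := by
          have hpos : (0:ℝ) < (1+Real.log J)^β := Real.rpow_pos_of_pos (by linarith) _
          have hx : (1+Real.log J) ≤ (1+Real.log J)^β := by
            nth_rewrite 1 [← Real.rpow_one (1+Real.log J)]
            exact Real.rpow_le_rpow_of_exponent_le (by linarith) hβ.le
          rw [div_mul_eq_mul_div, div_le_iff₀ hpos]
          nlinarith [Real.rpow_pos_of_pos (show (0:ℝ) < 2 by norm_num) β]
  linarith

lemma Ffun_tsum (β : ℝ) (hβ : 1 < β) (J : ℕ) (hJ : 1 ≤ J) :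
    ∑' n, Ffun β J n ≤ 3 + 2*(2:ℝ)^β + 2/(β-1) := by
  have hg : Summable (gfun β) :=
    summable_of_sum_range_le (gfun_nonneg β) (gfun_partial β hβ)
  have hsum := Ffun_summable β hβ J hJ
  have hsplit := Summable.sum_add_tsum_nat_add (f := Ffun β J) (2*J) hsum
  have hgshift : Summable (fun n => gfun β (n + 2*J)) := (summable_nat_add_iff (2*J)).2 hg
  have hFshift : Summable (fun n => Ffun β J (n + 2*J)) := (summable_nat_add_iff (2*J)).2 hsum
  have hgB : ∑' n, gfun β n ≤ 1 + 1/(β-1) :=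
    Real.tsum_le_of_sum_range_le (gfun_nonneg β) (gfun_partial β hβ)
  have hgsplit := Summable.sum_add_tsum_nat_add (f := gfun β) (2*J) hg
  have hgshift_le : ∑' n, gfun β (n + 2*J) ≤ 1 + 1/(β-1) := by
    have hpartial : 0 ≤ ∑ n ∈ range (2*J), gfun β n :=
      Finset.sum_nonneg (fun n _ => gfun_nonneg β n)
    linarith
  have htail : ∑' n, Ffun β J (n + 2*J) ≤ 2*(1 + 1/(β-1)) := by
    calc ∑' n, Ffun β J (n + 2*J) ≤ ∑' n, 2 * gfun β (n + 2*J) :=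
          Summable.tsum_le_tsum (fun n => Ffun_tail β J hJ n) hFshift (hgshift.mul_left 2)
      _ = 2 * ∑' n, gfun β (n + 2*J) := tsum_mul_left
      _ ≤ 2*(1 + 1/(β-1)) := by linarith
  have hhead := Ffun_head β hβ J hJ
  have hb1 : (0:ℝ) < β - 1 := by linarith
  have : ∑' n, Ffun β J n = (∑ n ∈ range (2*J), Ffun β J n) + ∑' n, Ffun β J (n + 2*J) :=
    hsplit.symm
  rw [this]
  have he : 2*(1 + 1/(β-1)) = 2 + 2/(β-1) := by rw [mul_add, mul_one, mul_one_div]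
  linarith

/-- Lemma 7.1: `Σ_{l≥1} 1/((1+|j-l|)(1+log l)^β) ≤ C(β)` uniformly in `j`. -/
theorem sum_log_weight_bounded (β : ℝ) (hβ : 1 < β) :
    ∃ C : ℝ, 0 < C ∧ ∀ j : ℕ+,
      Summable (fun l : ℕ+ => 1 / ((1 + |(j : ℝ) - (l : ℝ)|) * (1 + Real.log l) ^ β)) ∧
      ∑' l : ℕ+, 1 / ((1 + |(j : ℝ) - (l : ℝ)|) * (1 + Real.log l) ^ β) ≤ C := by
  have hb1 : (0:ℝ) < β - 1 := by linarith
  have hCpos : (0:ℝ) < 3 + 2*(2:ℝ)^β + 2/(β-1) := by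
    have h1 := Real.rpow_pos_of_pos (show (0:ℝ) < 2 by norm_num) β
    have h2 : (0:ℝ) < 2/(β-1) := div_pos (by norm_num) hb1
    linarith
  refine ⟨3 + 2*(2:ℝ)^β + 2/(β-1), hCpos, fun j => ?_⟩
  set J : ℕ := (j:ℕ) with hJdef
  have hJ : 1 ≤ J := j.one_le
  set f : ℕ+ → ℝ := fun l => 1 / ((1 + |(j : ℝ) - (l : ℝ)|) * (1 + Real.log l) ^ β) with hf
  have hcomp : ∀ n : ℕ, f (Equiv.pnatEquivNat.symm n) = Ffun β J n := by
    intro n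
    have h1 : ((Equiv.pnatEquivNat.symm n : ℕ+) : ℝ) = (n:ℝ)+1 := by
      simp [Equiv.pnatEquivNat, Nat.succPNat]
    have h2 : ((j : ℕ+) : ℝ) = (J:ℝ) := rfl
    simp only [hf, Ffun, h1, h2]
  have hsummable : Summable f := by
    rw [← Equiv.pnatEquivNat.symm.summable_iff]
    exact (Ffun_summable β hβ J hJ).congr (fun n => (hcomp n).symm)
  refine ⟨hsummable, ?_⟩
  have htsum : ∑' l : ℕ+, f l = ∑' n : ℕ, Ffun β J n := by
    rw [← Equiv.pnatEquivNat.symm.tsum_eq f]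
    exact tsum_congr hcomp
  rw [htsum]
  exact Ffun_tsum β hβ J hJ
end

section
/- There exists a constant C > 0 such that for every real β ≥ 2 and every integer j ≥ 1, Σ_{l=1}^∞ 1 / ((1+|j-l|)(1+log l)^β) ≤ C; in particular the bound is independent of both j and β. -/
set_option maxHeartbeats 1000000

private lemma bertrand_summable :
    Summable (fun n : ℕ => 1 / ((n : ℝ) * (1 + Real.log n) ^ 2)) := by
  rw [← summable_condensed_iff_of_nonneg]
  · have hs : Summable (fun k : ℕ => 4 / ((k : ℝ) + 1) ^ 2) := by
      have h := (Real.summable_one_div_nat_pow (p := 2)).mpr one_lt_two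
      have h1 : Summable (fun k : ℕ => 1 / ((k+1 : ℕ) : ℝ) ^ 2) :=
        (summable_nat_add_iff (f := fun n : ℕ => 1 / (n:ℝ)^2) 1).mpr h
      refine (h1.mul_left 4).congr fun k => ?_
      push_cast
      ring
    have hs2 : Summable (fun k : ℕ => 1 / (1 + (k : ℝ) * Real.log 2) ^ 2) := by
      refine Summable.of_nonneg_of_le (fun k => by positivity) (fun k => ?_) hs
      have hlog : (0.6931471803 : ℝ) < Real.log 2 := Real.log_two_gt_d9
      have hk : ((k:ℝ) + 1) / 2 ≤ 1 + (k:ℝ) * Real.log 2 := by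
        nlinarith [Nat.cast_nonneg (α := ℝ) k]
      have hpos : (0:ℝ) < ((k:ℝ)+1)/2 := by positivity
      calc 1 / (1 + (k : ℝ) * Real.log 2) ^ 2 ≤ 1 / (((k:ℝ)+1)/2) ^ 2 := by gcongr
        _ = 4 / ((k : ℝ) + 1) ^ 2 := by rw [div_pow]; norm_num
    refine hs2.congr fun k => ?_
    have hp : (0:ℝ) < (2:ℝ)^k := by positivity
    have hS : (0:ℝ) < 1 + (k:ℝ) * Real.log 2 := by
      have := Real.log_pos one_lt_two
      positivity
    rw [Nat.cast_pow, Nat.cast_ofNat, Real.log_pow]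
    field_simp
  · intro n; positivity
  · intro m n hm hmn
    have h1 : (1:ℝ) ≤ m := by exact_mod_cast hm
    have h2 : (m:ℝ) ≤ n := by exact_mod_cast hmn
    have hlm : (0:ℝ) ≤ Real.log m := Real.log_nonneg h1
    gcongr

private noncomputable def Gz (n : ℤ) : ℝ :=
  1 / ((1 + |(n : ℝ)|) * (1 + Real.log (1 + |(n : ℝ)|)) ^ 2)

private lemma Gz_nonneg (n : ℤ) : 0 ≤ Gz n := by
  unfold Gz
  have h1 : (0:ℝ) ≤ |(n:ℝ)| := abs_nonneg _
  positivity

private lemma Gz_nat (n : ℕ) : Gz (n : ℤ) =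
    1 / ((1 + (n:ℝ)) * (1 + Real.log (1 + (n:ℝ))) ^ 2) := by
  unfold Gz
  rw [Int.cast_natCast, abs_of_nonneg (Nat.cast_nonneg n)]

private lemma Gz_summable : Summable Gz := by
  have hnat : Summable (fun n : ℕ => Gz (n : ℤ)) := by
    have h1 : Summable (fun n : ℕ => 1 / (((n+1:ℕ) : ℝ) * (1 + Real.log ((n+1:ℕ))) ^ 2)) :=
      (summable_nat_add_iff (f := fun n : ℕ => 1 / ((n : ℝ) * (1 + Real.log n) ^ 2)) 1).mpr
        bertrand_summable
    refine h1.congr fun n => ?_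
    rw [Gz_nat]
    push_cast
    ring_nf
  refine Summable.of_nat_of_neg hnat (hnat.congr fun n => ?_)
  unfold Gz
  push_cast
  rw [abs_neg]

private lemma a_summable :
    Summable (fun n : ℕ => 2 / ((1 + (n:ℝ)) * (1 + Real.log n) ^ 2)) := by
  rw [← summable_nat_add_iff 1]
  have h1 : Summable (fun n : ℕ => 1 / (((n+1:ℕ) : ℝ) * (1 + Real.log ((n+1:ℕ))) ^ 2)) :=
    (summable_nat_add_iff (f := fun n : ℕ => 1 / ((n : ℝ) * (1 + Real.log n) ^ 2)) 1).mpr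
      bertrand_summable
  refine Summable.of_nonneg_of_le (fun n => by positivity) (fun n => ?_) (h1.mul_left 2)
  have hge : (1:ℝ) ≤ ((n+1:ℕ) : ℝ) := by exact_mod_cast Nat.succ_le_succ (Nat.zero_le n)
  have hlog : (0:ℝ) ≤ Real.log ((n+1:ℕ)) := Real.log_nonneg hge
  have hS : (0:ℝ) < (1 + Real.log ((n+1:ℕ))) ^ 2 := by positivity
  rw [mul_one_div]
  apply div_le_div_of_nonneg_left (by norm_num) (by positivity)
  push_cast
  nlinarith

private lemma key_bound (β : ℝ) (hβ : 2 ≤ β) (j l : ℕ+) :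
    1 / ((1 + |(j : ℝ) - (l : ℝ)|) * (1 + Real.log l) ^ β)
      ≤ 2 / ((1 + ((l:ℕ):ℝ)) * (1 + Real.log ((l:ℕ):ℝ)) ^ 2)
        + Gz (((j:ℕ):ℤ) - ((l:ℕ):ℤ)) := by
  have hL : (1:ℝ) ≤ (l:ℝ) := by exact_mod_cast l.one_le
  have hlog : (0:ℝ) ≤ Real.log l := Real.log_nonneg hL
  have hD : (0:ℝ) ≤ |(j : ℝ) - (l : ℝ)| := abs_nonneg _
  have hcast : (Int.cast ((((j:ℕ):ℤ) - ((l:ℕ):ℤ))) : ℝ) = (j:ℝ) - (l:ℝ) := by push_cast; ring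
  have hS : (0:ℝ) < (1 + Real.log l) ^ 2 := by positivity
  have hrpow : (1 + Real.log ↑↑l) ^ (2:ℕ) ≤ (1 + Real.log ↑↑l) ^ β := by
    rw [← Real.rpow_natCast (1 + Real.log ↑↑l) 2]
    exact Real.rpow_le_rpow_of_exponent_le (by linarith) (by exact_mod_cast hβ)
  have step1 : 1 / ((1 + |(j : ℝ) - (l : ℝ)|) * (1 + Real.log l) ^ β)
      ≤ 1 / ((1 + |(j : ℝ) - (l : ℝ)|) * (1 + Real.log l) ^ 2) := by
    apply one_div_le_one_div_of_le (by positivity)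
    have := hrpow
    norm_num at this ⊢
    nlinarith
  rcases le_or_gt ((l:ℝ)) (2 * |(j : ℝ) - (l : ℝ)|) with hcase | hcase
  · have h2 : 1 / ((1 + |(j : ℝ) - (l : ℝ)|) * (1 + Real.log l) ^ 2)
        ≤ 2 / ((1 + ((l:ℕ):ℝ)) * (1 + Real.log ((l:ℕ):ℝ)) ^ 2) := by
      rw [div_le_div_iff₀ (by positivity) (by positivity)]
      nlinarith
    have := Gz_nonneg (((j:ℕ):ℤ) - ((l:ℕ):ℤ))
    linarith
  · have hGz : Gz (((j:ℕ):ℤ) - ((l:ℕ):ℤ))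
        = 1 / ((1 + |(j : ℝ) - (l : ℝ)|) * (1 + Real.log (1 + |(j : ℝ) - (l : ℝ)|)) ^ 2) := by
      unfold Gz
      rw [hcast]
    have hDnat : |(j : ℝ) - (l : ℝ)| = ((((j:ℕ):ℤ) - ((l:ℕ):ℤ)).natAbs : ℝ) := by
      rw [Nat.cast_natAbs]
      push_cast
      ring
    have h1D : 1 + |(j : ℝ) - (l : ℝ)| ≤ (l:ℝ) := by
      rcases Nat.eq_zero_or_pos ((((j:ℕ):ℤ) - ((l:ℕ):ℤ)).natAbs) with h0 | h1
      · rw [hDnat, h0]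
        simpa using hL
      · have : (1:ℝ) ≤ |(j : ℝ) - (l : ℝ)| := by
          rw [hDnat]; exact_mod_cast h1
        linarith
    have hlogD : (0:ℝ) ≤ Real.log (1 + |(j : ℝ) - (l : ℝ)|) :=
      Real.log_nonneg (by linarith)
    have hlogle : Real.log (1 + |(j : ℝ) - (l : ℝ)|) ≤ Real.log l :=
      Real.log_le_log (by linarith) h1D
    have h2 : 1 / ((1 + |(j : ℝ) - (l : ℝ)|) * (1 + Real.log l) ^ 2)
        ≤ Gz (((j:ℕ):ℤ) - ((l:ℕ):ℤ)) := by
      rw [hGz]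
      apply one_div_le_one_div_of_le (by positivity)
      have h3 : (1 + Real.log (1 + |(j : ℝ) - (l : ℝ)|)) ^ 2 ≤ (1 + Real.log l) ^ 2 := by
        nlinarith
      nlinarith
    have ha : (0:ℝ) ≤ 2 / ((1 + ((l:ℕ):ℝ)) * (1 + Real.log ((l:ℕ):ℝ)) ^ 2) := by positivity
    linarith

/-- Remark 7.2: `Σ_{l≥1} 1/((1+|j-l|)(1+log l)^β) ≤ C` uniformly in `j` and in `β ≥ 2`. -/
theorem sum_log_weight_bounded_uniform :
    ∃ C : ℝ, 0 < C ∧ ∀ β : ℝ, 2 ≤ β → ∀ j : ℕ+,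
      Summable (fun l : ℕ+ => 1 / ((1 + |(j : ℝ) - (l : ℝ)|) * (1 + Real.log l) ^ β)) ∧
      ∑' l : ℕ+, 1 / ((1 + |(j : ℝ) - (l : ℝ)|) * (1 + Real.log l) ^ β) ≤ C := by
  set a : ℕ → ℝ := fun n => 2 / ((1 + (n:ℝ)) * (1 + Real.log n) ^ 2) with ha_def
  have ha_nonneg : ∀ n, 0 ≤ a n := fun n => by positivity
  have ha_sum : Summable a := a_summable
  have hG_sum : Summable Gz := Gz_summable
  refine ⟨(∑' n, a n) + (∑' n : ℤ, Gz n) + 1, ?_, ?_⟩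
  · have h1 : 0 ≤ ∑' n, a n := tsum_nonneg ha_nonneg
    have h2 : 0 ≤ ∑' n : ℤ, Gz n := tsum_nonneg Gz_nonneg
    linarith
  intro β hβ j
  have hinj1 : Function.Injective (fun l : ℕ+ => (l : ℕ)) := fun x y h =>
    PNat.coe_injective h
  have hinj2 : Function.Injective (fun l : ℕ+ => ((j:ℕ):ℤ) - ((l:ℕ):ℤ)) := by
    intro x y h
    simp only [sub_right_inj, Int.natCast_inj] at h
    exact_mod_cast h
  have hFa : Summable (fun l : ℕ+ => a (l : ℕ)) := ha_sum.comp_injective hinj1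
  have hFG : Summable (fun l : ℕ+ => Gz (((j:ℕ):ℤ) - ((l:ℕ):ℤ))) :=
    hG_sum.comp_injective hinj2
  have hF : Summable (fun l : ℕ+ => a (l : ℕ) + Gz (((j:ℕ):ℤ) - ((l:ℕ):ℤ))) := hFa.add hFG
  have hkey : ∀ l : ℕ+, 1 / ((1 + |(j : ℝ) - (l : ℝ)|) * (1 + Real.log l) ^ β)
      ≤ a (l : ℕ) + Gz (((j:ℕ):ℤ) - ((l:ℕ):ℤ)) := fun l => key_bound β hβ j l
  have hnonneg : ∀ l : ℕ+,
      0 ≤ 1 / ((1 + |(j : ℝ) - (l : ℝ)|) * (1 + Real.log l) ^ β) := by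
    intro l
    have hL : (1:ℝ) ≤ (l:ℝ) := by exact_mod_cast l.one_le
    have hlog : (0:ℝ) ≤ Real.log l := Real.log_nonneg hL
    have hb : (0:ℝ) ≤ (1 + Real.log l) ^ β := Real.rpow_nonneg (by linarith) β
    have hd : (0:ℝ) ≤ |(j : ℝ) - (l : ℝ)| := abs_nonneg _
    apply div_nonneg one_pos.le
    apply mul_nonneg (by linarith) hb
  have hsum : Summable (fun l : ℕ+ =>
      1 / ((1 + |(j : ℝ) - (l : ℝ)|) * (1 + Real.log l) ^ β)) :=
    Summable.of_nonneg_of_le hnonneg hkey hF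
  refine ⟨hsum, ?_⟩
  calc ∑' l : ℕ+, 1 / ((1 + |(j : ℝ) - (l : ℝ)|) * (1 + Real.log l) ^ β)
      ≤ ∑' l : ℕ+, (a (l : ℕ) + Gz (((j:ℕ):ℤ) - ((l:ℕ):ℤ))) :=
        Summable.tsum_le_tsum hkey hsum hF
    _ = (∑' l : ℕ+, a (l : ℕ)) + ∑' l : ℕ+, Gz (((j:ℕ):ℤ) - ((l:ℕ):ℤ)) :=
        Summable.tsum_add hFa hFG
    _ ≤ (∑' n, a n) + (∑' n : ℤ, Gz n) := by
        gcongr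
        · exact tsum_comp_le_tsum_of_inj ha_sum ha_nonneg hinj1
        · exact tsum_comp_le_tsum_of_inj hG_sum Gz_nonneg hinj2
    _ ≤ (∑' n, a n) + (∑' n : ℤ, Gz n) + 1 := by linarith
end

section
/- For all real numbers p ≥ 2 and β ≥ 1 there exists a constant C > 0 such that for every integer k ≥ 1 and every sequence ζ : ℕ₊ → ℝ with Σ_{i≥1} i^p·ζ_i² < ∞, one has Σ_{i=1}^∞ |ζ_i| / ((1+|k-i|)(1+log i)^β) ≤ (C/(1+k)) · (Σ_{i≥1} i^p·ζ_i²)^{1/2}. -/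
/-- Cauchy–Schwarz for `tsum`s of nonnegative reals. -/
lemma aux_tsum_cauchy_schwarz {ι : Type*} {f g : ι → ℝ} (hf : ∀ i, 0 ≤ f i)
    (hg : ∀ i, 0 ≤ g i) (h2f : Summable fun i => f i ^ 2)
    (h2g : Summable fun i => g i ^ 2) :
    Summable (fun i => f i * g i) ∧
      ∑' i, f i * g i ≤ Real.sqrt (∑' i, f i ^ 2) * Real.sqrt (∑' i, g i ^ 2) := by
  have key : ∀ u : Finset ι,
      ∑ i ∈ u, f i * g i ≤ Real.sqrt (∑' i, f i ^ 2) * Real.sqrt (∑' i, g i ^ 2) := by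
    intro u
    refine (Real.sum_mul_le_sqrt_mul_sqrt u f g).trans ?_
    have h1 : ∑ i ∈ u, f i ^ 2 ≤ ∑' i, f i ^ 2 :=
      Summable.sum_le_tsum u (fun i _ => sq_nonneg _) h2f
    have h2 : ∑ i ∈ u, g i ^ 2 ≤ ∑' i, g i ^ 2 :=
      Summable.sum_le_tsum u (fun i _ => sq_nonneg _) h2g
    exact mul_le_mul (Real.sqrt_le_sqrt h1) (Real.sqrt_le_sqrt h2)
      (Real.sqrt_nonneg _) (Real.sqrt_nonneg _)
  have hs := summable_of_sum_le (fun i => mul_nonneg (hf i) (hg i)) key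
  exact ⟨hs, Summable.tsum_le_of_sum_le hs key⟩

lemma aux_summable_inv_sq_pnat : Summable (fun i : ℕ+ => 1 / (i : ℝ) ^ 2) := by
  have h : Summable (fun n : ℕ => 1 / (n : ℝ) ^ 2) := Real.summable_one_div_nat_pow.mpr one_lt_two
  have := h.comp_injective (fun a b hab => PNat.coe_injective hab : Function.Injective (fun i : ℕ+ => (i : ℕ)))
  exact this.congr fun i => by simp [Function.comp]

lemma aux_summable_int : Summable (fun m : ℤ => 1 / (1 + |(m : ℝ)|) ^ 2) := by
  have h : Summable (fun n : ℕ => 1 / (n : ℝ) ^ 2) := Real.summable_one_div_nat_pow.mpr one_lt_two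
  have h1 : Summable (fun n : ℕ => 1 / (1 + (n : ℝ)) ^ 2) := by
    have := (summable_nat_add_iff 1).mpr h
    exact this.congr fun n => by push_cast; ring_nf
  refine Summable.of_nat_of_neg (h1.congr fun n => by simp) (h1.congr fun n => by simp)

/-- Cauchy–Schwarz consequence of Lemma 7.3: for `ζ ∈ ℓ^{2,p}`,
`Σ_i |ζ_i|/((1+|k-i|)(1+log i)^β) ≤ C(1+k)⁻¹ ‖ζ‖_p`. -/
theorem sum_seq_log_weight_bound (p β : ℝ) (hp : 2 ≤ p) (hβ : 1 ≤ β) :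
    ∃ C : ℝ, 0 < C ∧ ∀ k : ℕ+, ∀ ζ : ℕ+ → ℝ,
      Summable (fun i : ℕ+ => (i : ℝ) ^ p * (ζ i) ^ 2) →
      Summable (fun i : ℕ+ => |ζ i| / ((1 + |(k : ℝ) - (i : ℝ)|) * (1 + Real.log i) ^ β)) ∧
      ∑' i : ℕ+, |ζ i| / ((1 + |(k : ℝ) - (i : ℝ)|) * (1 + Real.log i) ^ β) ≤
        C / (1 + (k : ℝ)) * Real.sqrt (∑' i : ℕ+, (i : ℝ) ^ p * (ζ i) ^ 2) := by
  classical
  set A : ℝ := ∑' i : ℕ+, 1 / (i : ℝ) ^ 2 with hA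
  set B : ℝ := ∑' m : ℤ, 1 / (1 + |(m : ℝ)|) ^ 2 with hB
  have hA0 : 0 ≤ A := tsum_nonneg fun i => by positivity
  have hB0 : 0 ≤ B := tsum_nonneg fun m => by positivity
  refine ⟨2 * Real.sqrt (A + B) + 1, by positivity, ?_⟩
  intro k ζ hT
  have hI1 : ∀ i : ℕ+, (1 : ℝ) ≤ (i : ℝ) := fun i => by exact_mod_cast i.one_le
  have hK1 : (1 : ℝ) ≤ (k : ℝ) := hI1 k
  have hK0 : (0 : ℝ) < 1 + (k : ℝ) := by linarith
  have hL : ∀ i : ℕ+, (1 : ℝ) ≤ 1 + Real.log i := fun i => by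
    have := Real.log_nonneg (hI1 i); linarith
  have hLb : ∀ i : ℕ+, (1 : ℝ) ≤ (1 + Real.log i) ^ β := fun i => by
    calc (1:ℝ) = (1 + Real.log i) ^ (0:ℝ) := by rw [Real.rpow_zero]
    _ ≤ (1 + Real.log i) ^ β := Real.rpow_le_rpow_of_exponent_le (hL i) (by linarith)
  have hIp : ∀ i : ℕ+, (i : ℝ) ≤ (i : ℝ) ^ (p / 2) := fun i => by
    calc (i:ℝ) = (i:ℝ) ^ (1:ℝ) := (Real.rpow_one _).symm
    _ ≤ (i:ℝ) ^ (p/2) := Real.rpow_le_rpow_of_exponent_le (hI1 i) (by linarith)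
  have hI0 : ∀ i : ℕ+, (0 : ℝ) < (i : ℝ) := fun i => lt_of_lt_of_le one_pos (hI1 i)
  set f : ℕ+ → ℝ := fun i => (i : ℝ) ^ (p / 2) * |ζ i| with hf
  set g : ℕ+ → ℝ :=
    fun i => ((i : ℝ) ^ (p / 2) * ((1 + |(k : ℝ) - (i : ℝ)|) * (1 + Real.log i) ^ β))⁻¹ with hg
  have hgpos : ∀ i, 0 ≤ g i := fun i => by
    have := hI0 i; have := hL i; have := hLb i
    positivity
  have hfpos : ∀ i, 0 ≤ f i := fun i => by positivity
  have hfg : ∀ i, f i * g i = |ζ i| / ((1 + |(k : ℝ) - (i : ℝ)|) * (1 + Real.log i) ^ β) := by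
    intro i
    have h1 : (i : ℝ) ^ (p / 2) ≠ 0 := by positivity
    have h2 : (1 + |(k : ℝ) - (i : ℝ)|) * (1 + Real.log i) ^ β ≠ 0 := by
      have := hL i; have := hLb i; positivity
    simp only [hf, hg]
    field_simp
  have hf2 : (fun i : ℕ+ => f i ^ 2) = fun i : ℕ+ => (i : ℝ) ^ p * (ζ i) ^ 2 := by
    funext i
    have : ((i : ℝ) ^ (p / 2)) ^ 2 = (i : ℝ) ^ p := by
      rw [sq, ← Real.rpow_add (hI0 i)]; congr 1; ring
    simp only [hf, mul_pow, sq_abs, this]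
  -- pointwise bound for g²
  have hgb : ∀ i : ℕ+, g i ^ 2 ≤
      4 / (1 + (k : ℝ)) ^ 2 * (1 / (i : ℝ) ^ 2 + 1 / (1 + |(k : ℝ) - (i : ℝ)|) ^ 2) := by
    intro i
    have hD0 : (0:ℝ) ≤ |(k : ℝ) - (i : ℝ)| := abs_nonneg _
    have hterm2 : (0:ℝ) ≤ 4 / (1 + (k : ℝ)) ^ 2 * (1 / (1 + |(k : ℝ) - (i : ℝ)|) ^ 2) := by
      positivity
    have hterm1 : (0:ℝ) ≤ 4 / (1 + (k : ℝ)) ^ 2 * (1 / (i : ℝ) ^ 2) := by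
      have := hI0 i; positivity
    rcases le_or_gt (2 * (i : ℕ)) (k : ℕ) with hcase | hcase
    · -- small i : 1 + |k - i| ≥ (1+k)/2
      have h2I : 2 * (i : ℝ) ≤ (k : ℝ) := by exact_mod_cast hcase
      have hDval : |(k : ℝ) - (i : ℝ)| = (k : ℝ) - (i : ℝ) :=
        abs_of_nonneg (by have := hI1 i; linarith)
      have e1 : (1 + (k : ℝ)) / 2 ≤ 1 + |(k : ℝ) - (i : ℝ)| := by
        rw [hDval]; have := hI1 i; linarith
      have hlow : (i : ℝ) * ((1 + (k : ℝ)) / 2) ≤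
          (i : ℝ) ^ (p / 2) * ((1 + |(k : ℝ) - (i : ℝ)|) * (1 + Real.log i) ^ β) := by
        calc (i : ℝ) * ((1 + (k : ℝ)) / 2) = (i : ℝ) * (((1 + (k : ℝ)) / 2) * 1) := by ring
        _ ≤ (i : ℝ) ^ (p / 2) * ((1 + |(k : ℝ) - (i : ℝ)|) * (1 + Real.log i) ^ β) := by
            apply mul_le_mul (hIp i) (mul_le_mul e1 (hLb i) one_pos.le (by positivity))
              (by positivity) (by positivity)
      have hXpos : (0:ℝ) < (i : ℝ) * ((1 + (k : ℝ)) / 2) := by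
        have := hI0 i; positivity
      have : g i ^ 2 ≤ (((i : ℝ) * ((1 + (k : ℝ)) / 2)) ^ 2)⁻¹ := by
        rw [hg, inv_pow]
        exact inv_anti₀ (by positivity) (pow_le_pow_left₀ hXpos.le hlow 2)
      have heq : (((i : ℝ) * ((1 + (k : ℝ)) / 2)) ^ 2)⁻¹ =
          4 / (1 + (k : ℝ)) ^ 2 * (1 / (i : ℝ) ^ 2) := by
        have := hI0 i
        field_simp
        ring
      rw [heq] at this
      linarith
    · -- large i : i ≥ (1+k)/2
      have h2I : 1 + (k : ℝ) ≤ 2 * (i : ℝ) := by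
        have h' : (k : ℕ) + 1 ≤ 2 * (i : ℕ) := hcase
        have h'' : ((k : ℕ) : ℝ) + 1 ≤ 2 * ((i : ℕ) : ℝ) := by exact_mod_cast h'
        push_cast at h'' ⊢; linarith
      have hlow : ((1 + (k : ℝ)) / 2) * (1 + |(k : ℝ) - (i : ℝ)|) ≤
          (i : ℝ) ^ (p / 2) * ((1 + |(k : ℝ) - (i : ℝ)|) * (1 + Real.log i) ^ β) := by
        calc ((1 + (k : ℝ)) / 2) * (1 + |(k : ℝ) - (i : ℝ)|)
            = ((1 + (k : ℝ)) / 2) * ((1 + |(k : ℝ) - (i : ℝ)|) * 1) := by ring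
        _ ≤ (i : ℝ) ^ (p / 2) * ((1 + |(k : ℝ) - (i : ℝ)|) * (1 + Real.log i) ^ β) := by
            apply mul_le_mul (le_trans (by linarith) (hIp i))
              (mul_le_mul le_rfl (hLb i) one_pos.le (by positivity)) (by positivity)
              (by positivity)
      have hXpos : (0:ℝ) < ((1 + (k : ℝ)) / 2) * (1 + |(k : ℝ) - (i : ℝ)|) := by positivity
      have : g i ^ 2 ≤ ((((1 + (k : ℝ)) / 2) * (1 + |(k : ℝ) - (i : ℝ)|)) ^ 2)⁻¹ := by
        rw [hg, inv_pow]
        exact inv_anti₀ (by positivity) (pow_le_pow_left₀ hXpos.le hlow 2)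
      have heq : ((((1 + (k : ℝ)) / 2) * (1 + |(k : ℝ) - (i : ℝ)|)) ^ 2)⁻¹ =
          4 / (1 + (k : ℝ)) ^ 2 * (1 / (1 + |(k : ℝ) - (i : ℝ)|) ^ 2) := by
        field_simp
        ring
      rw [heq] at this
      linarith
  -- summability and tsum bound for 1/(1+|k-i|)²
  have hι : Function.Injective (fun i : ℕ+ => (k : ℤ) - (i : ℤ)) := by
    intro a b h
    have : (a : ℤ) = (b : ℤ) := sub_right_inj.mp h
    exact_mod_cast this
  have hcomp : ∀ i : ℕ+, 1 / (1 + |(k : ℝ) - (i : ℝ)|) ^ 2 =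
      (fun m : ℤ => 1 / (1 + |(m : ℝ)|) ^ 2) ((k : ℤ) - (i : ℤ)) := by
    intro i
    have : |(((k : ℤ) - (i : ℤ) : ℤ) : ℝ)| = |(k : ℝ) - (i : ℝ)| := by push_cast; ring_nf
    simp only [this]
  have SBk : Summable (fun i : ℕ+ => 1 / (1 + |(k : ℝ) - (i : ℝ)|) ^ 2) := by
    have := aux_summable_int.comp_injective hι
    exact this.congr fun i => (hcomp i).symm
  have hBk : ∑' i : ℕ+, 1 / (1 + |(k : ℝ) - (i : ℝ)|) ^ 2 ≤ B := by
    rw [hB]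
    refine Summable.tsum_le_tsum_of_inj _ hι (fun c _ => by positivity)
      (fun i => le_of_eq (hcomp i)) SBk aux_summable_int
  -- sum the pointwise bound
  set u : ℕ+ → ℝ := fun i =>
    4 / (1 + (k : ℝ)) ^ 2 * (1 / (i : ℝ) ^ 2 + 1 / (1 + |(k : ℝ) - (i : ℝ)|) ^ 2) with hu
  have su : Summable u := (aux_summable_inv_sq_pnat.add SBk).mul_left _
  have hgsum : ∀ s : Finset ℕ+, ∑ i ∈ s, g i ^ 2 ≤ ∑' i, u i := fun s =>
    (Finset.sum_le_sum fun i _ => hgb i).trans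
      (Summable.sum_le_tsum s (fun i _ => by have := hI0 i; positivity) su)
  have hg2 : Summable (fun i => g i ^ 2) := summable_of_sum_le (fun i => sq_nonneg _) hgsum
  have htu : ∑' i, u i ≤ 4 / (1 + (k : ℝ)) ^ 2 * (A + B) := by
    rw [hu, tsum_mul_left, Summable.tsum_add aux_summable_inv_sq_pnat SBk]
    have h4 : (0:ℝ) ≤ 4 / (1 + (k : ℝ)) ^ 2 := by positivity
    exact mul_le_mul_of_nonneg_left (by rw [hA]; linarith [hBk]) h4
  have htg : ∑' i, g i ^ 2 ≤ 4 / (1 + (k : ℝ)) ^ 2 * (A + B) :=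
    le_trans (Summable.tsum_le_of_sum_le hg2 hgsum) htu
  -- Cauchy–Schwarz
  have hf2sum : Summable (fun i : ℕ+ => f i ^ 2) := by rw [hf2]; exact hT
  obtain ⟨hsum, hle⟩ := aux_tsum_cauchy_schwarz hfpos hgpos hf2sum hg2
  refine ⟨hsum.congr fun i => hfg i, ?_⟩
  have hsq : Real.sqrt (∑' i, g i ^ 2) ≤ 2 / (1 + (k : ℝ)) * Real.sqrt (A + B) := by
    have : (4 : ℝ) / (1 + (k : ℝ)) ^ 2 * (A + B) = (2 / (1 + (k : ℝ))) ^ 2 * (A + B) := by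
      rw [div_pow]; norm_num
    calc Real.sqrt (∑' i, g i ^ 2) ≤ Real.sqrt (4 / (1 + (k : ℝ)) ^ 2 * (A + B)) :=
          Real.sqrt_le_sqrt htg
    _ = 2 / (1 + (k : ℝ)) * Real.sqrt (A + B) := by
        rw [this, Real.sqrt_mul (by positivity), Real.sqrt_sq (by positivity)]
  calc ∑' i : ℕ+, |ζ i| / ((1 + |(k : ℝ) - (i : ℝ)|) * (1 + Real.log i) ^ β)
      = ∑' i, f i * g i := tsum_congr fun i => (hfg i).symm
  _ ≤ Real.sqrt (∑' i, f i ^ 2) * Real.sqrt (∑' i, g i ^ 2) := hle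
  _ ≤ Real.sqrt (∑' i, f i ^ 2) * (2 / (1 + (k : ℝ)) * Real.sqrt (A + B)) :=
      mul_le_mul_of_nonneg_left hsq (Real.sqrt_nonneg _)
  _ = 2 * Real.sqrt (A + B) / (1 + (k : ℝ)) * Real.sqrt (∑' i : ℕ+, (i : ℝ) ^ p * (ζ i) ^ 2) := by
      rw [hf2]; ring
  _ ≤ (2 * Real.sqrt (A + B) + 1) / (1 + (k : ℝ)) *
        Real.sqrt (∑' i : ℕ+, (i : ℝ) ^ p * (ζ i) ^ 2) := by
      have hs0 := Real.sqrt_nonneg (∑' i : ℕ+, (i : ℝ) ^ p * (ζ i) ^ 2)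
      gcongr
      linarith
end

section
/- Let n ≥ 1 be an integer and let 0 < θ < 1. There exists a constant c > 0, depending only on n and θ, such that for every 0 < σ ≤ 1, Σ_{k ∈ ℤⁿ} exp(|k|^θ - σ·|k|) ≤ c · exp(c · σ^{-θ/(1-θ)}), where |k| = Σ_{i=1}^n |k_i|. -/
set_option maxHeartbeats 1000000


open scoped BigOperators

/-- Sum over `Fin n → ℤ` of a product factorizes. -/
private lemma pi_prod_summable {f : ℤ → ℝ} (hf0 : ∀ m, 0 ≤ f m) (hf : Summable f) :
    ∀ n : ℕ, Summable (fun k : Fin n → ℤ => ∏ i, f (k i)) ∧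
      (∑' k : Fin n → ℤ, ∏ i, f (k i)) = (∑' m, f m) ^ n := by
  intro n
  induction n with
  | zero =>
      haveI : Unique (Fin 0 → ℤ) :=
        ⟨⟨fun i => i.elim0⟩, fun g => funext fun i => i.elim0⟩
      haveI : Fintype (Fin 0 → ℤ) := Fintype.ofSubsingleton default
      constructor
      · exact Summable.of_finite
      · rw [tsum_fintype]
        simp
  | succ n ih =>
      have hpos : ∀ p : ℤ × (Fin n → ℤ), 0 ≤ f p.1 * ∏ i, f (p.2 i) :=
        fun p => mul_nonneg (hf0 _) (Finset.prod_nonneg fun i _ => hf0 _)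
      have hg : Summable (fun p : ℤ × (Fin n → ℤ) => f p.1 * ∏ i, f (p.2 i)) :=
        Summable.mul_of_nonneg (f := f) (g := fun k : Fin n → ℤ => ∏ i, f (k i))
          hf ih.1 (fun m => hf0 m)
          (fun k => Finset.prod_nonneg fun i _ => hf0 _)
      have hcomp : ∀ k : Fin (n + 1) → ℤ,
          (∏ i, f (k i)) = f ((Fin.consEquiv (fun _ : Fin (n + 1) => ℤ)).symm k).1 *
            ∏ i, f (((Fin.consEquiv (fun _ : Fin (n + 1) => ℤ)).symm k).2 i) := by
        intro k
        simp [Fin.consEquiv, Fin.prod_univ_succ, Fin.tail]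
      have hsum : Summable (fun k : Fin (n + 1) → ℤ => ∏ i, f (k i)) := by
        have := ((Fin.consEquiv (fun _ : Fin (n + 1) => ℤ)).symm.summable_iff
          (f := fun p : ℤ × (Fin n → ℤ) => f p.1 * ∏ i, f (p.2 i))).mpr hg
        exact this.congr fun k => (hcomp k).symm
      refine ⟨hsum, ?_⟩
      have h1 : (∑' k : Fin (n + 1) → ℤ, ∏ i, f (k i)) =
          ∑' p : ℤ × (Fin n → ℤ), f p.1 * ∏ i, f (p.2 i) := by
        rw [← (Fin.consEquiv (fun _ : Fin (n + 1) => ℤ)).symm.tsum_eq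
          (fun p : ℤ × (Fin n → ℤ) => f p.1 * ∏ i, f (p.2 i))]
        exact tsum_congr hcomp
      have h2 : (∑' p : ℤ × (Fin n → ℤ), f p.1 * ∏ i, f (p.2 i)) =
          ∑' m : ℤ, ∑' k : Fin n → ℤ, f m * ∏ i, f (k i) :=
        Summable.tsum_prod' hg fun m => ih.1.mul_left (f m)
      rw [h1, h2]
      have h3 : ∀ m : ℤ, (∑' k : Fin n → ℤ, f m * ∏ i, f (k i)) =
          f m * (∑' m', f m') ^ n := by
        intro m
        rw [tsum_mul_left, ih.2]
      calc (∑' m : ℤ, ∑' k : Fin n → ℤ, f m * ∏ i, f (k i))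
          = ∑' m : ℤ, f m * (∑' m', f m') ^ n := tsum_congr h3
        _ = (∑' m, f m) * (∑' m', f m') ^ n := by rw [tsum_mul_right]
        _ = (∑' m, f m) ^ (n + 1) := by ring

/-- Geometric-type sum over `ℤ`. -/
private lemma int_exp_summable {a : ℝ} (ha : 0 < a) :
    Summable (fun m : ℤ => Real.exp (-(a * |(m : ℝ)|))) ∧
    (∑' m : ℤ, Real.exp (-(a * |(m : ℝ)|))) ≤ 2 / (1 - Real.exp (-a)) := by
  set r : ℝ := Real.exp (-a) with hr
  have hr0 : 0 < r := Real.exp_pos _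
  have hr1 : r < 1 := Real.exp_lt_one_iff.mpr (by linarith)
  have h1r : 0 < 1 - r := by linarith
  have hnat : ∀ m : ℕ, Real.exp (-(a * |((m : ℤ) : ℝ)|)) = r ^ m := by
    intro m
    rw [hr, ← Real.exp_nat_mul]
    congr 1
    push_cast
    rw [abs_of_nonneg (by positivity : (0:ℝ) ≤ (m:ℝ))]
    ring
  have hneg : ∀ m : ℕ, Real.exp (-(a * |((-(↑m + 1) : ℤ) : ℝ)|)) = r ^ (m + 1) := by
    intro m
    rw [hr, ← Real.exp_nat_mul]
    congr 1
    push_cast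
    rw [abs_of_nonpos (by push_cast; linarith : ((-((m:ℝ) + 1)) : ℝ) ≤ 0)]
    push_cast
    ring
  have hs1 : Summable (fun m : ℕ => Real.exp (-(a * |((m : ℤ) : ℝ)|))) := by
    refine (summable_geometric_of_lt_one hr0.le hr1).congr fun m => (hnat m).symm
  have hs2 : Summable (fun m : ℕ => Real.exp (-(a * |((-(↑m + 1) : ℤ) : ℝ)|))) := by
    refine (((summable_geometric_of_lt_one hr0.le hr1).mul_left r)).congr fun m => ?_
    rw [hneg m, pow_succ]
    ring
  have hsum : Summable (fun m : ℤ => Real.exp (-(a * |(m : ℝ)|))) :=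
    Summable.of_nat_of_neg_add_one hs1 hs2
  refine ⟨hsum, ?_⟩
  rw [tsum_of_nat_of_neg_add_one hs1 hs2]
  have e1 : (∑' m : ℕ, Real.exp (-(a * |((m : ℤ) : ℝ)|))) = (1 - r)⁻¹ := by
    rw [tsum_congr hnat, tsum_geometric_of_lt_one hr0.le hr1]
  have e2 : (∑' m : ℕ, Real.exp (-(a * |((-(↑m + 1) : ℤ) : ℝ)|))) ≤ (1 - r)⁻¹ := by
    rw [tsum_congr hneg]
    have : (∑' m : ℕ, r ^ (m + 1)) = r * (1 - r)⁻¹ := by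
      rw [← tsum_geometric_of_lt_one hr0.le hr1, ← tsum_mul_left]
      exact tsum_congr fun m => by rw [pow_succ]; ring
    rw [this]
    have h0 : (0:ℝ) ≤ (1 - r)⁻¹ := by positivity
    nlinarith
  rw [e1]
  have : 2 / (1 - r) = (1 - r)⁻¹ + (1 - r)⁻¹ := by
    rw [div_eq_mul_inv]; ring
  rw [this]
  linarith

/-- Weighted AM-GM (Young-type) estimate: `x^θ ≤ (σ/2)x + A·σ^{-θ/(1-θ)}`. -/
private lemma young_bound {θ : ℝ} (hθ0 : 0 < θ) (hθ1 : θ < 1) :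
    ∃ A : ℝ, 0 < A ∧ ∀ σ : ℝ, 0 < σ → ∀ x : ℝ, 0 ≤ x →
      x ^ θ ≤ σ / 2 * x + A * σ ^ (-(θ / (1 - θ))) := by
  have h1θ : 0 < 1 - θ := by linarith
  set t : ℝ := θ / (1 - θ) with htdef
  have ht : 0 < t := div_pos hθ0 h1θ
  refine ⟨(1 - θ) * (2 * θ) ^ t, by positivity, ?_⟩
  intro σ hσ x hx
  set ε : ℝ := σ / (2 * θ) with hεdef
  have hε : 0 < ε := by positivity
  have key := Real.geom_mean_le_arith_mean2_weighted hθ0.le h1θ.le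
    (mul_nonneg hε.le hx) (Real.rpow_nonneg hε.le (-t)) (by ring)
  have lhs_eq : (ε * x) ^ θ * (ε ^ (-t)) ^ (1 - θ) = x ^ θ := by
    rw [Real.mul_rpow hε.le hx, ← Real.rpow_mul hε.le]
    · have hexp : (-t) * (1 - θ) = -θ := by
        rw [htdef, neg_mul, div_mul_cancel₀ _ h1θ.ne']
      rw [hexp, mul_comm (ε ^ θ) (x ^ θ), mul_assoc, ← Real.rpow_add hε]
      simp
  have h2θ : (0:ℝ) < 2 * θ := by linarith
  have r1 : θ * (ε * x) = σ / 2 * x := by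
    rw [hεdef]
    field_simp
  have r2 : (1 - θ) * ε ^ (-t) = ((1 - θ) * (2 * θ) ^ t) * σ ^ (-t) := by
    rw [hεdef, Real.div_rpow hσ.le h2θ.le, Real.rpow_neg h2θ.le, div_eq_mul_inv, inv_inv]
    ring
  calc x ^ θ = (ε * x) ^ θ * (ε ^ (-t)) ^ (1 - θ) := lhs_eq.symm
    _ ≤ θ * (ε * x) + (1 - θ) * ε ^ (-t) := key
    _ = σ / 2 * x + ((1 - θ) * (2 * θ) ^ t) * σ ^ (-t) := by rw [r1, r2]

/-- Exponential sum estimate underlying Lemmas 5.1 and 5.2: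
`Σ_{k∈ℤⁿ} exp(|k|^θ - σ|k|) ≤ c·exp(c·σ^{-θ/(1-θ)})`. -/
theorem exp_sum_estimate (n : ℕ) (hn : 1 ≤ n) (θ : ℝ) (hθ0 : 0 < θ) (hθ1 : θ < 1) :
    ∃ c : ℝ, 0 < c ∧ ∀ σ : ℝ, 0 < σ → σ ≤ 1 →
      Summable (fun k : Fin n → ℤ =>
        Real.exp ((∑ i, |(k i : ℝ)|) ^ θ - σ * ∑ i, |(k i : ℝ)|)) ∧
      ∑' k : Fin n → ℤ,
        Real.exp ((∑ i, |(k i : ℝ)|) ^ θ - σ * ∑ i, |(k i : ℝ)|) ≤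
        c * Real.exp (c * σ ^ (-(θ / (1 - θ)))) := by
  obtain ⟨A, hA, hY⟩ := young_bound hθ0 hθ1
  have h1θ : 0 < 1 - θ := by linarith
  set t : ℝ := θ / (1 - θ) with htdef
  have ht : 0 < t := div_pos hθ0 h1θ
  have hnt : (0:ℝ) < (n : ℝ) / t := by
    have : (0:ℝ) < (n : ℝ) := by exact_mod_cast hn
    positivity
  refine ⟨(8:ℝ) ^ n + A + (n : ℝ) / t, by positivity, ?_⟩
  intro σ hσ hσ1
  have ha : 0 < σ / 2 := by positivity
  obtain ⟨hsumZ, htsumZ⟩ := int_exp_summable ha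
  obtain ⟨hsumP, htsumP⟩ :=
    pi_prod_summable (f := fun m : ℤ => Real.exp (-(σ / 2 * |(m : ℝ)|)))
      (fun m => (Real.exp_pos _).le) hsumZ n
  -- termwise bound
  have hbd : ∀ k : Fin n → ℤ,
      Real.exp ((∑ i, |(k i : ℝ)|) ^ θ - σ * ∑ i, |(k i : ℝ)|)
      ≤ Real.exp (A * σ ^ (-t)) * ∏ i, Real.exp (-(σ / 2 * |(k i : ℝ)|)) := by
    intro k
    have hS : 0 ≤ ∑ i, |(k i : ℝ)| := Finset.sum_nonneg fun i _ => abs_nonneg _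
    have h1 := hY σ hσ _ hS
    have hprod : (∏ i, Real.exp (-(σ / 2 * |(k i : ℝ)|)))
        = Real.exp (-(σ / 2 * ∑ i, |(k i : ℝ)|)) := by
      rw [← Real.exp_sum]
      congr 1
      rw [Finset.mul_sum, ← Finset.sum_neg_distrib]
    rw [hprod, ← Real.exp_add]
    exact Real.exp_le_exp.mpr (by linarith)
  have hsummable : Summable (fun k : Fin n → ℤ =>
      Real.exp ((∑ i, |(k i : ℝ)|) ^ θ - σ * ∑ i, |(k i : ℝ)|)) :=
    Summable.of_nonneg_of_le (fun k => (Real.exp_pos _).le) hbd (hsumP.mul_left _)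
  refine ⟨hsummable, ?_⟩
  have hT := Summable.tsum_le_tsum hbd hsummable (hsumP.mul_left _)
  rw [tsum_mul_left, htsumP] at hT
  -- geometric sum bound : ∑' f ≤ 8/σ
  have hgeo : (∑' m : ℤ, Real.exp (-(σ / 2 * |(m : ℝ)|))) ≤ 8 / σ := by
    have hx : Real.exp (-(σ / 2)) ≤ 1 / (1 + σ / 2) := by
      rw [Real.exp_neg, one_div]
      apply inv_anti₀ (by linarith)
      linarith [Real.add_one_le_exp (σ / 2)]
    have h14 : σ / 4 ≤ 1 - Real.exp (-(σ / 2)) := by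
      have : 1 / (1 + σ / 2) ≤ 1 - σ / 4 := by
        rw [div_le_iff₀ (by linarith : (0:ℝ) < 1 + σ / 2)]
        nlinarith
      linarith
    have h140 : (0:ℝ) < σ / 4 := by positivity
    calc (∑' m : ℤ, Real.exp (-(σ / 2 * |(m : ℝ)|)))
        ≤ 2 / (1 - Real.exp (-(σ / 2))) := htsumZ
      _ ≤ 2 / (σ / 4) := by
          apply div_le_div_of_nonneg_left (by norm_num) h140 h14
      _ = 8 / σ := by
          field_simp
          ring
  have hf_nonneg : (0:ℝ) ≤ ∑' m : ℤ, Real.exp (-(σ / 2 * |(m : ℝ)|)) :=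
    tsum_nonneg fun m => (Real.exp_pos _).le
  -- (8/σ)^n ≤ 8^n * exp((n/t) σ^{-t})
  have hlog : (n : ℝ) * Real.log σ⁻¹ ≤ ((n : ℝ) / t) * σ ^ (-t) := by
    have hrp : 0 < σ ^ (-t) := Real.rpow_pos_of_pos hσ _
    have h5 : Real.log (σ ^ (-t)) ≤ σ ^ (-t) - 1 := Real.log_le_sub_one_of_pos hrp
    rw [Real.log_rpow hσ] at h5
    have h6 : Real.log σ⁻¹ ≤ σ ^ (-t) / t := by
      rw [Real.log_inv]
      have h5' : t * -Real.log σ ≤ σ ^ (-t) := by nlinarith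
      calc -Real.log σ = t * -Real.log σ / t := by field_simp
        _ ≤ σ ^ (-t) / t := (div_le_div_iff_of_pos_right ht).mpr h5'
    have h7 : (0:ℝ) ≤ (n : ℝ) := by positivity
    calc (n : ℝ) * Real.log σ⁻¹ ≤ (n : ℝ) * (σ ^ (-t) / t) :=
          mul_le_mul_of_nonneg_left h6 h7
      _ = ((n : ℝ) / t) * σ ^ (-t) := by ring
  have hpow : ((8:ℝ) / σ) ^ n ≤ 8 ^ n * Real.exp (((n : ℝ) / t) * σ ^ (-t)) := by
    have e4 : ((8:ℝ) / σ) ^ n = 8 ^ n * Real.exp ((n : ℝ) * Real.log σ⁻¹) := by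
      rw [div_pow, div_eq_mul_inv, ← inv_pow]
      congr 1
      rw [← Real.exp_log (inv_pos.mpr hσ), ← Real.exp_nat_mul, Real.log_exp]
    rw [e4]
    exact mul_le_mul_of_nonneg_left (Real.exp_le_exp.mpr hlog) (by positivity)
  -- assemble
  set c : ℝ := (8:ℝ) ^ n + A + (n : ℝ) / t with hcdef
  have hc8 : (8:ℝ) ^ n ≤ c := by rw [hcdef]; linarith
  have hcA : A + (n : ℝ) / t ≤ c := by
    rw [hcdef]
    have : (0:ℝ) < (8:ℝ) ^ n := by positivity
    linarith
  have hrp0 : (0:ℝ) ≤ σ ^ (-t) := (Real.rpow_pos_of_pos hσ _).le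
  calc (∑' k : Fin n → ℤ,
        Real.exp ((∑ i, |(k i : ℝ)|) ^ θ - σ * ∑ i, |(k i : ℝ)|))
      ≤ Real.exp (A * σ ^ (-t)) *
        (∑' m : ℤ, Real.exp (-(σ / 2 * |(m : ℝ)|))) ^ n := hT
    _ ≤ Real.exp (A * σ ^ (-t)) * (8 / σ) ^ n := by
        exact mul_le_mul_of_nonneg_left (pow_le_pow_left₀ hf_nonneg hgeo n)
          (Real.exp_pos _).le
    _ ≤ Real.exp (A * σ ^ (-t)) * (8 ^ n * Real.exp (((n : ℝ) / t) * σ ^ (-t))) :=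
        mul_le_mul_of_nonneg_left hpow (Real.exp_pos _).le
    _ = 8 ^ n * Real.exp ((A + (n : ℝ) / t) * σ ^ (-t)) := by
        rw [show Real.exp (A * σ ^ (-t)) * (8 ^ n * Real.exp (((n : ℝ) / t) * σ ^ (-t)))
            = 8 ^ n * (Real.exp (A * σ ^ (-t)) * Real.exp (((n : ℝ) / t) * σ ^ (-t))) by ring,
          ← Real.exp_add]
        congr 1
        ring
    _ ≤ c * Real.exp (c * σ ^ (-t)) := by
        apply mul_le_mul hc8 (Real.exp_le_exp.mpr (mul_le_mul_of_nonneg_right hcA hrp0))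
          (Real.exp_pos _).le
        have : (0:ℝ) < (8:ℝ) ^ n := by positivity
        linarith
end
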